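/- arXiv:1510.05842 — 5 statements merged into one kernel-verified Lean document; each statement's English description precedes it below -/
import Mathlib

section
/- Let V and E be finite types, let ι, τ : E → V and a, c : E → ℤ × ℤ be functions. Suppose there exists a family of additive homomorphisms χ_v : ℤ × ℤ → ℤ (one for each v ∈ V) such that for every e ∈ E one has χ_{ι(e)}(a(e)) = χ_{τ(e)}(c(e)) and this common value is nonzero. Then there exist functions x, y : V → ℤ × ℤ such that: (1) for every v ∈ V, det(x(v), y(v)) ≠ 0 (so x(v) and y(v) generate a finite-index subgroup of ℤ²), and (2) for every e ∈ E, |det(x(ι(e)), a(e))| + |det(y(ι(e)), a(e))| = |det(x(τ(e)), c(e))| + |det(y(τ(e)), c(e))|, where det((p,q),(r,s)) = p·s − q·r. -/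
/-! Write χ_v(u) = det(w_v, u), taking w_v ≠ 0 arbitrary when χ_v = 0 (such a v lies on no
edge), and let w_v^⊥ be w_v rotated by a quarter turn.
For N large, x_v = N w_v + w_v^⊥ and y_v = N w_v - w_v^⊥ work: det(x_v, y_v) = 2N|w_v|² ≠ 0, and
on an edge the perturbation det(w_v^⊥, u) is dominated by N χ_v(u), so that
|det(x_v, u)| + |det(y_v, u)| = 2N|χ_v(u)|, which is the same number at both ends of the edge. -/

/-- The determinant of the 2×2 integer matrix with columns `u` and `v`. -/
def det2 (u v : ℤ × ℤ) : ℤ := u.1 * v.2 - u.2 * v.1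

theorem abs_add_add_abs_sub_of_abs_le {α : Type*} [CommRing α] [LinearOrder α]
    [IsStrictOrderedRing α] {a b : α} (h : |b| ≤ |a|) : |a + b| + |a - b| = 2 * |a| := by
  obtain ⟨hb₁, hb₂⟩ := abs_le.mp h
  rcases le_total 0 a with ha | ha
  · rw [abs_of_nonneg ha] at hb₁ hb₂ ⊢
    rw [abs_of_nonneg (by linarith), abs_of_nonneg (by linarith)]
    ring
  · rw [abs_of_nonpos ha] at hb₁ hb₂ ⊢
    rw [abs_of_nonpos (by linarith), abs_of_nonpos (by linarith)]
    ring

def perp (w : ℤ × ℤ) : ℤ × ℤ := (w.2, -w.1)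

theorem det2_smul_add_left (n : ℤ) (w p u : ℤ × ℤ) :
    det2 (n • w + p) u = n * det2 w u + det2 p u := by
  simp only [det2, Prod.fst_add, Prod.snd_add, Prod.smul_fst, Prod.smul_snd, smul_eq_mul]
  ring

theorem det2_smul_sub_left (n : ℤ) (w p u : ℤ × ℤ) :
    det2 (n • w - p) u = n * det2 w u - det2 p u := by
  simp only [det2, Prod.fst_sub, Prod.snd_sub, Prod.smul_fst, Prod.smul_snd, smul_eq_mul]
  ring

theorem det2_smul_add_perp_smul_sub_perp (n : ℤ) (w : ℤ × ℤ) :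
    det2 (n • w + perp w) (n • w - perp w) = 2 * n * (w.1 * w.1 + w.2 * w.2) := by
  simp only [det2, perp, Prod.fst_add, Prod.snd_add, Prod.fst_sub, Prod.snd_sub, Prod.smul_fst,
    Prod.smul_snd, smul_eq_mul]
  ring

theorem det2_smul_add_perp_smul_sub_perp_ne_zero {n : ℤ} (hn : n ≠ 0) {w : ℤ × ℤ} (hw : w ≠ 0) :
    det2 (n • w + perp w) (n • w - perp w) ≠ 0 := by
  rw [det2_smul_add_perp_smul_sub_perp]
  refine mul_ne_zero (mul_ne_zero two_ne_zero hn) fun h => hw ?_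
  obtain ⟨h₁, h₂⟩ := mul_self_add_mul_self_eq_zero.mp h
  exact Prod.ext h₁ h₂

theorem abs_det2_smul_add_add_abs_det2_smul_sub {n : ℤ} (hn : 0 ≤ n) {w p u : ℤ × ℤ}
    (hwu : det2 w u ≠ 0) (hpu : |det2 p u| ≤ n) :
    |det2 (n • w + p) u| + |det2 (n • w - p) u| = 2 * n * |det2 w u| := by
  have hdom : |det2 p u| ≤ |n * det2 w u| := by
    rw [abs_mul, abs_of_nonneg hn]
    exact hpu.trans (le_mul_of_one_le_right hn (Int.one_le_abs hwu))
  rw [det2_smul_add_left, det2_smul_sub_left, abs_add_add_abs_sub_of_abs_le hdom, abs_mul,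
    abs_of_nonneg hn, mul_assoc]

-- For the zero form, `w` is an arbitrary nonzero vector.
theorem AddMonoidHom.exists_ne_zero_det2_eq (f : ℤ × ℤ →+ ℤ) :
    ∃ w ≠ 0, ∀ u, f u ≠ 0 → det2 w u = f u := by
  have hrepr : ∀ u, det2 (f (0, 1), -f (1, 0)) u = f u := by
    intro u
    have hu : u = u.1 • ((1, 0) : ℤ × ℤ) + u.2 • (0, 1) := by ext <;> simp
    conv_rhs => rw [hu, map_add, map_zsmul, map_zsmul]
    simp only [det2, smul_eq_mul]
    ring
  by_cases hf : f = 0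
  · exact ⟨(1, 0), by simp, fun u hu => absurd (by simp [hf]) hu⟩
  · refine ⟨_, fun h0 => hf ?_, fun u _ => hrepr u⟩
    rw [Prod.mk_eq_zero, neg_eq_zero] at h0
    ext u
    simp [← hrepr u, det2, h0]

theorem exists_equitable_of_det2 {V E : Type*} [Finite E] (ι τ : E → V) (a c : E → ℤ × ℤ)
    (w : V → ℤ × ℤ) (hw : ∀ v, w v ≠ 0)
    (hcompat : ∀ e, det2 (w (ι e)) (a e) = det2 (w (τ e)) (c e))
    (hnonzero : ∀ e, det2 (w (ι e)) (a e) ≠ 0) :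
    ∃ x y : V → ℤ × ℤ,
      (∀ v, det2 (x v) (y v) ≠ 0) ∧
      (∀ e, |det2 (x (ι e)) (a e)| + |det2 (y (ι e)) (a e)| =
        |det2 (x (τ e)) (c e)| + |det2 (y (τ e)) (c e)|) := by
  obtain ⟨M, hM⟩ := Finite.exists_le fun e =>
    max |det2 (perp (w (ι e))) (a e)| |det2 (perp (w (τ e))) (c e)|
  obtain ⟨N, hN, hMN⟩ : ∃ N : ℤ, 0 < N ∧ M ≤ N := ⟨max M 0 + 1, by omega, by omega⟩
  refine ⟨fun v => N • w v + perp (w v), fun v => N • w v - perp (w v),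
    fun v => det2_smul_add_perp_smul_sub_perp_ne_zero hN.ne' (hw v), fun e => ?_⟩
  obtain ⟨hι, hτ⟩ := max_le_iff.mp ((hM e).trans hMN)
  rw [abs_det2_smul_add_add_abs_det2_smul_sub hN.le (hnonzero e) hι,
    abs_det2_smul_add_add_abs_det2_smul_sub hN.le (hcompat e ▸ hnonzero e) hτ, hcompat e]

theorem equitable_set_exists_general {V E : Type} [Fintype E]
    (ι τ : E → V) (a c : E → ℤ × ℤ)
    (χ : V → (ℤ × ℤ →+ ℤ))
    (hcompat : ∀ e : E, χ (ι e) (a e) = χ (τ e) (c e))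
    (hnonzero : ∀ e : E, χ (ι e) (a e) ≠ 0) :
    ∃ x y : V → ℤ × ℤ,
      (∀ v : V, det2 (x v) (y v) ≠ 0) ∧
      (∀ e : E,
        |det2 (x (ι e)) (a e)| + |det2 (y (ι e)) (a e)| =
        |det2 (x (τ e)) (c e)| + |det2 (y (τ e)) (c e)|) := by
  choose w hw0 hw using fun v => (χ v).exists_ne_zero_det2_eq
  have hι : ∀ e, det2 (w (ι e)) (a e) = χ (ι e) (a e) := fun e => hw _ _ (hnonzero e)
  have hτ : ∀ e, det2 (w (τ e)) (c e) = χ (τ e) (c e) :=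
    fun e => hw _ _ (hcompat e ▸ hnonzero e)
  exact exists_equitable_of_det2 ι τ a c w hw0 (fun e => by rw [hι, hτ, hcompat])
    (fun e => hι e ▸ hnonzero e)

/-- Combinatorial content of Theorem 2.4: a tubular group admitting a homomorphism to ℤ
nonzero on all edge groups has an equitable set (with two elements at each vertex). -/
theorem equitable_set_exists {V E : Type} [Fintype V] [Fintype E]
    (ι τ : E → V) (a c : E → ℤ × ℤ)
    (χ : V → (ℤ × ℤ →+ ℤ))
    (hcompat : ∀ e : E, χ (ι e) (a e) = χ (τ e) (c e))
    (hnonzero : ∀ e : E, χ (ι e) (a e) ≠ 0) :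
    ∃ x y : V → ℤ × ℤ,
      (∀ v : V, det2 (x v) (y v) ≠ 0) ∧
      (∀ e : E,
        |det2 (x (ι e)) (a e)| + |det2 (y (ι e)) (a e)| =
        |det2 (x (τ e)) (c e)| + |det2 (y (τ e)) (c e)|) :=
  equitable_set_exists_general ι τ a c χ hcompat hnonzero
end

section
/- Let G be a group and χ : G →* Multiplicative ℤ a group homomorphism whose kernel is isomorphic to a free group of finite rank. Let x, y ∈ G satisfy χ(x) = χ(y) ≠ 1. Let A = ⟨x⟩ and B = ⟨y⟩ be the cyclic subgroups generated by x and y (both infinite cyclic since χ(x) ≠ 1), and let φ : A ≃* B be the isomorphism sending x to y. Then there exists a homomorphism χ' from the HNN extension HNNExtension G A B φ to Multiplicative ℤ such that χ' composed with the canonical map G → HNNExtension G A B φ equals χ, and the kernel of χ' is isomorphic to a free group of finite rank. -/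
/-!
Extend `χ` by `χ' t = 1`. Write `χ(G) = ⟨χ g₀⟩` and `χ x = χ g₀ ^ e`, so that
`G = ker χ · {g₀ ^ i | 0 ≤ i < |e|} · ⟨x⟩`. Then `ker χ'` is free on a basis of `ker χ` together
with the conjugates `g₀ ^ i * t * g₀ ^ (-i)`, `0 ≤ i < |e|`.

These elements generate a normal subgroup: conjugating `t` by `κ * g₀ ^ i * x ^ s` gives one of
them up to factors in `ker χ`, because `t * x ^ s * t⁻¹ = y ^ s` and `x ^ s * y ^ (-s) ∈ ker χ`.
Together with `g₀` it generates everything, so it is `ker χ'`. Freeness is Britton's lemma: a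
pinch `t^(±1) * g₀ ^ (-i) * κ * g₀ ^ j * t^(∓1)` with `g₀ ^ (-i) * κ * g₀ ^ j ∈ ⟨x⟩ ∪ ⟨y⟩` forces
`i = j` and `κ = 1` (compare `χ`-values), so the image of a reduced word is again reduced.
-/

open HNNExtension Subgroup

theorem FreeGroup.IsReduced.of_map {α β : Type*} {f : α → β} {L : List (α × Bool)}
    (h : IsReduced (L.map (Prod.map f id))) : IsReduced L := by
  simp only [IsReduced, List.isChain_map] at h
  exact h.imp fun a b hab hab' => hab (by simp [hab'])

theorem FreeGroup.IsReduced.eq_nil_of_mk_eq_one {α : Type*} [DecidableEq α]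
    {L : List (α × Bool)} (hL : IsReduced L) (h : mk L = 1) : L = [] := by
  rw [← hL.reduce_eq, ← toWord_mk, h, toWord_one]

theorem List.exists_eq_map_inl_append {α β γ : Type*} :
    ∀ L : List ((α ⊕ β) × γ), ∃ (L₀ : List (α × γ)) (L' : List ((α ⊕ β) × γ)),
      L = L₀.map (Prod.map Sum.inl id) ++ L' ∧ (L' = [] ∨ ∃ j b L'', L' = (Sum.inr j, b) :: L'')
  | [] => ⟨[], [], rfl, .inl rfl⟩
  | (.inr j, b) :: L => ⟨[], _, rfl, .inr ⟨j, b, L, rfl⟩⟩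
  | (.inl a, b) :: L => by
    obtain ⟨L₀, L', rfl, hL'⟩ := exists_eq_map_inl_append L
    exact ⟨(a, b) :: L₀, L', rfl, hL'⟩

theorem Subgroup.eq_ker_of_sup_zpowers_eq_top {Γ Q : Type*} [Group Γ] [Group Q]
    [IsMulTorsionFree Q] {f : Γ →* Q} {H : Subgroup Γ} [H.Normal] (hH : H ≤ f.ker) {a : Γ}
    (ha : f a ≠ 1) (htop : H ⊔ zpowers a = ⊤) : H = f.ker := by
  refine le_antisymm hH fun h hh => ?_
  obtain ⟨m, hm, _, ⟨z, rfl⟩, rfl⟩ := mem_sup_of_normal_left.1 (htop ▸ mem_top h)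
  have hz : f a ^ z = f a ^ (0 : ℤ) := by
    simpa [MonoidHom.mem_ker.1 (hH hm)] using MonoidHom.mem_ker.1 hh
  rw [injective_zpow_iff_not_isOfFinOrder.2 (not_isOfFinOrder_of_isMulTorsionFree ha) hz]
  simpa using hm

namespace MonoidHom

variable {G Q : Type*} [Group G] [Group Q] (f : G →* Q)

theorem exists_range_eq_zpowers [IsCyclic Q] : ∃ g₀ : G, f.range = zpowers (f g₀) := by
  obtain ⟨γ, h⟩ := (f.range.isCyclic_iff_exists_zpowers_eq_top).1 inferInstance
  obtain ⟨g₀, rfl⟩ : γ ∈ f.range := h ▸ mem_zpowers γ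
  exact ⟨g₀, h.symm⟩

theorem exists_mem_ker_mul_pow_mul_zpow {g₀ x : G} {e : ℤ} (he : e ≠ 0)
    (hg₀ : f.range ≤ zpowers (f g₀)) (hx : f x = f g₀ ^ e) (g : G) :
    ∃ κ ∈ f.ker, ∃ i < e.natAbs, ∃ s : ℤ, g = κ * g₀ ^ i * x ^ s := by
  obtain ⟨z, hz⟩ := mem_zpowers_iff.1 (hg₀ ⟨g, rfl⟩)
  have hr : ((z % e).toNat : ℤ) = z % e := Int.toNat_of_nonneg (Int.emod_nonneg z he)
  refine ⟨g * x ^ (-(z / e)) * (g₀ ^ (z % e).toNat)⁻¹, ?_, (z % e).toNat, ?_, z / e, by group⟩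
  · rw [mem_ker, map_mul, map_mul, map_inv, map_zpow, map_pow, hx, ← hz, ← zpow_natCast, hr]
    nth_rewrite 1 [← Int.emod_add_mul_ediv z e]
    group
  · have := Int.emod_lt z he
    omega

variable [IsMulTorsionFree Q]

theorem eq_and_eq_one_of_mem_zpowers {g₀ x κ : G} {e : ℤ} (hx : f x = f g₀ ^ e)
    (hx1 : f x ≠ 1) (hκ : κ ∈ f.ker) {i j : ℕ} (hi : i < e.natAbs) (hj : j < e.natAbs)
    (h : (g₀ ^ i)⁻¹ * (κ * g₀ ^ j) ∈ zpowers x) : i = j ∧ κ = 1 := by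
  obtain ⟨s, hs⟩ := mem_zpowers_iff.1 h
  have hg₀ : f g₀ ≠ 1 := fun h1 => hx1 (by rw [hx, h1, one_zpow])
  have hexp : e * s = j - i := by
    refine injective_zpow_iff_not_isOfFinOrder.2 (not_isOfFinOrder_of_isMulTorsionFree hg₀) ?_
    have := congrArg f hs
    simp only [map_mul, map_inv, map_zpow, map_pow, hx, mem_ker.1 hκ, one_mul] at this
    simp only [zpow_mul, this, zpow_sub, zpow_natCast]
    group
  have hij : (j : ℤ) - i = 0 :=
    Int.eq_zero_of_dvd_of_natAbs_lt_natAbs ⟨s, hexp.symm⟩ (by omega)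
  have hs0 : s = 0 := by
    rcases mul_eq_zero.1 (hexp.trans hij) with he | hs
    · exact absurd (by rw [hx, he, zpow_zero]) hx1
    · exact hs
  obtain rfl : i = j := by omega
  refine ⟨rfl, ?_⟩
  rwa [hs0, zpow_zero, eq_comm, inv_mul_eq_one, right_eq_mul] at hs

theorem eq_and_eq_one_of_mem_toSubgroup {g₀ x y κ : G} {e : ℤ} (hx : f x = f g₀ ^ e)
    (hx1 : f x ≠ 1) (hxy : f x = f y) (hκ : κ ∈ f.ker) {i j : ℕ} (hi : i < e.natAbs)
    (hj : j < e.natAbs) {u : ℤˣ}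
    (h : (g₀ ^ i)⁻¹ * (κ * g₀ ^ j) ∈ HNNExtension.toSubgroup (zpowers x) (zpowers y) u) :
    i = j ∧ κ = 1 := by
  rcases Int.units_eq_one_or u with rfl | rfl
  · exact f.eq_and_eq_one_of_mem_zpowers hx hx1 hκ hi hj h
  · exact f.eq_and_eq_one_of_mem_zpowers (hxy ▸ hx) (hxy ▸ hx1) hκ hi hj h

end MonoidHom

namespace HNNExtension

variable {G : Type*} [Group G] {A B : Subgroup G} {φ : A ≃* B}

theorem normal_of_t_mem {H : Subgroup (HNNExtension G A B φ)} (ht : t ∈ H)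
    (hof : ∀ g, ∀ h ∈ H, of g * h * (of g)⁻¹ ∈ H) : H.Normal := by
  rw [← normalizer_eq_top_iff, eq_top_iff']
  intro a
  induction a using induction_on with
  | of g =>
    refine mem_normalizer_iff.2 fun h => ⟨hof g h, fun hh => ?_⟩
    simpa [mul_assoc] using hof g⁻¹ _ hh
  | t =>
    refine mem_normalizer_iff.2 fun h => ⟨fun hh => mul_mem (mul_mem ht hh) (inv_mem ht),
      fun hh => ?_⟩
    simpa [mul_assoc] using mul_mem (mul_mem (inv_mem ht) hh) ht
  | mul a b ha hb => exact mul_mem ha hb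
  | inv a ha => exact inv_mem ha

variable (φ) {α β : Type*}

def baseAndConjT (k : α → G) (c : β → G) : α ⊕ β → HNNExtension G A B φ :=
  Sum.elim (fun a => of (k a)) fun i => of (c i) * t * (of (c i))⁻¹

/-- The `ReducedWord` data (head, then pairs `(u, g)` standing for `t ^ u * g`) of the image of a
word under `baseAndConjT φ k c`; a letter `inr i` contributes `c i * t ^ (±1) * (c i)⁻¹`. -/
def syllables (k : α → G) (c : β → G) : List ((α ⊕ β) × Bool) → G × List (ℤˣ × G)
  | [] => (1, [])
  | (.inl a, b) :: L => (cond b (k a) (k a)⁻¹ * (syllables k c L).1, (syllables k c L).2)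
  | (.inr i, b) :: L =>
    (c i, (cond b 1 (-1), (c i)⁻¹ * (syllables k c L).1) :: (syllables k c L).2)

theorem of_head_mul_prod_syllables (k : α → G) (c : β → G) (L : List ((α ⊕ β) × Bool)) :
    of (syllables k c L).1 * ((syllables k c L).2.map fun p => t ^ (p.1 : ℤ) * of p.2).prod =
      FreeGroup.lift (baseAndConjT φ k c) (FreeGroup.mk L) := by
  rw [FreeGroup.lift_mk]
  induction L with
  | nil => simp [syllables]
  | cons p L ih =>
    rw [List.map_cons, List.prod_cons, ← ih]
    obtain ⟨a | i, _ | _⟩ := p <;> simp [syllables, baseAndConjT, mul_assoc]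

theorem syllables_map_inl_append (k : α → G) (c : β → G) (L₀ : List (α × Bool))
    (L : List ((α ⊕ β) × Bool)) :
    syllables k c (L₀.map (Prod.map Sum.inl id) ++ L) =
      (FreeGroup.lift k (FreeGroup.mk L₀) * (syllables k c L).1, (syllables k c L).2) := by
  induction L₀ with
  | nil => simp
  | cons p L₀ ih =>
    obtain ⟨a, b⟩ := p
    simp [syllables, ih, FreeGroup.lift_mk, mul_assoc]

variable {φ}

theorem isChain_syllables {k : α → G} {c : β → G}
    (hpinch : ∀ i j w u,
      (c i)⁻¹ * (FreeGroup.lift k w * c j) ∈ toSubgroup A B u → i = j ∧ w = 1)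
    {L : List ((α ⊕ β) × Bool)} (hL : FreeGroup.IsReduced L) :
    (syllables k c L).2.IsChain fun a b => a.2 ∈ toSubgroup A B a.1 → a.1 = b.1 := by
  classical
  induction L with
  | nil => exact List.isChain_nil
  | cons p L ih =>
    obtain ⟨a | i, b⟩ := p
    · exact ih hL.tail
    obtain ⟨L₀, L', rfl, rfl | ⟨j, b', L'', rfl⟩⟩ := List.exists_eq_map_inl_append L
    · simp only [syllables, syllables_map_inl_append]
      exact List.isChain_singleton _
    simp only [syllables, syllables_map_inl_append] at ih ⊢
    -- a pinch can only come from two adjacent letters `inr i`, which have equal signs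
    refine List.isChain_cons_cons.2 ⟨fun hmem => ?_, ih hL.tail⟩
    obtain ⟨rfl, hw⟩ := hpinch _ _ _ _ hmem
    have hL₀ : L₀ = [] := ((hL.infix ⟨[_], _, rfl⟩).of_map).eq_nil_of_mk_eq_one hw
    subst hL₀
    obtain rfl : b = b' := (FreeGroup.isReduced_cons_cons.1 hL).1 rfl
    rfl

theorem lift_baseAndConjT_map_inl (k : α → G) (c : β → G) (w : FreeGroup α) :
    FreeGroup.lift (baseAndConjT φ k c) (FreeGroup.map Sum.inl w) = of (FreeGroup.lift k w) := by
  induction w using FreeGroup.induction_on with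
  | C1 => simp
  | of a => simp [baseAndConjT]
  | inv_of a _ => simp [baseAndConjT]
  | mul u v hu hv => simp [hu, hv]

theorem of_mem_range_lift_baseAndConjT {k : α → G} (c : β → G) {κ : G}
    (hκ : κ ∈ (FreeGroup.lift k).range) :
    (of κ : HNNExtension G A B φ) ∈ (FreeGroup.lift (baseAndConjT φ k c)).range := by
  obtain ⟨w, rfl⟩ := hκ
  exact ⟨FreeGroup.map Sum.inl w, lift_baseAndConjT_map_inl k c w⟩

theorem injective_lift_baseAndConjT {k : α → G} {c : β → G}
    (hk : Function.Injective (FreeGroup.lift k))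
    (hpinch : ∀ i j w u,
      (c i)⁻¹ * (FreeGroup.lift k w * c j) ∈ toSubgroup A B u → i = j ∧ w = 1) :
    Function.Injective (FreeGroup.lift (baseAndConjT φ k c)) := by
  classical
  refine (injective_iff_map_eq_one _).2 fun w hw => ?_
  have hred : FreeGroup.IsReduced w.toWord := FreeGroup.isReduced_toWord
  have hprod := of_head_mul_prod_syllables φ k c w.toWord
  rw [FreeGroup.mk_toWord, hw] at hprod
  obtain ⟨L₀, L', hL, rfl | ⟨j, b, L'', rfl⟩⟩ := List.exists_eq_map_inl_append w.toWord
  · rw [List.append_nil] at hL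
    rw [hL, ← List.append_nil (L₀.map _), syllables_map_inl_append] at hprod
    have hL₀ : FreeGroup.mk L₀ = 1 := hk (of_injective φ (by simpa [syllables] using hprod))
    rw [hL] at hred
    rw [← FreeGroup.toWord_eq_nil_iff, hL, hred.of_map.eq_nil_of_mk_eq_one hL₀, List.map_nil]
  · have := ReducedWord.toList_eq_nil_of_mem_of_range φ ⟨_, _, isChain_syllables hpinch hred⟩
      (hprod ▸ one_mem _)
    simp [hL, syllables_map_inl_append, syllables] at this

end HNNExtension

namespace HNNExtension

variable {G : Type*} [Group G] {x y : G} {φ : zpowers x ≃* zpowers y}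

theorem coe_equiv_zpow (hφ : (φ ⟨x, mem_zpowers x⟩ : G) = y) (s : ℤ) :
    (φ (⟨x, mem_zpowers x⟩ ^ s) : G) = y ^ s := by
  rw [map_zpow, SubgroupClass.coe_zpow, hφ]

theorem of_zpow_eq_conj (hφ : (φ ⟨x, mem_zpowers x⟩ : G) = y) (s : ℤ) :
    (of (y ^ s) : HNNExtension G (zpowers x) (zpowers y) φ) = t * of (x ^ s) * t⁻¹ := by
  rw [← coe_equiv_zpow hφ, equiv_eq_conj]
  rfl

theorem map_coe_equiv {Q : Type*} [Group Q] {f : G →* Q} (hφ : (φ ⟨x, mem_zpowers x⟩ : G) = y)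
    (hxy : f x = f y) (a : zpowers x) : f (φ a) = f a := by
  obtain ⟨s, hs⟩ := mem_zpowers_iff.1 a.2
  obtain rfl : a = ⟨x, mem_zpowers x⟩ ^ s := Subtype.ext (by simp [hs])
  rw [coe_equiv_zpow hφ]
  simp [hxy]

variable {Q α : Type*} [Group Q] {f : G →* Q} {k : α → G} {g₀ : G} {e : ℤ}

theorem conj_t_mem_range_lift_baseAndConjT (hφ : (φ ⟨x, mem_zpowers x⟩ : G) = y)
    (hxy : f x = f y) (hk : f.ker ≤ (FreeGroup.lift k).range) (he : e ≠ 0)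
    (hg₀ : f.range ≤ zpowers (f g₀)) (hx : f x = f g₀ ^ e) (g : G) :
    of g * t * (of g)⁻¹ ∈
      (FreeGroup.lift (baseAndConjT φ k fun i : Fin e.natAbs => g₀ ^ (i : ℕ))).range := by
  obtain ⟨κ, hκ, i, hi, s, rfl⟩ := f.exists_mem_ker_mul_pow_mul_zpow he hg₀ hx g
  have hκ' : κ * (g₀ ^ i * (x ^ s * y ^ (-s)) * (g₀ ^ i)⁻¹) ∈ f.ker :=
    mul_mem hκ (f.normal_ker.conj_mem _ (by simp [hxy]) _)
  have key : (of (κ * g₀ ^ i * x ^ s) : HNNExtension G (zpowers x) (zpowers y) φ) * t *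
      (of (κ * g₀ ^ i * x ^ s))⁻¹ =
        of (κ * (g₀ ^ i * (x ^ s * y ^ (-s)) * (g₀ ^ i)⁻¹)) *
          baseAndConjT φ k (fun i : Fin e.natAbs => g₀ ^ (i : ℕ)) (.inr ⟨i, hi⟩) * (of κ)⁻¹ := by
    simp only [baseAndConjT, Sum.elim_inr, map_mul, map_inv, map_zpow, of_zpow_eq_conj hφ]
    group
  rw [key]
  exact mul_mem (mul_mem (of_mem_range_lift_baseAndConjT _ (hk hκ'))
    ⟨.of (.inr ⟨i, hi⟩), by simp⟩) (inv_mem (of_mem_range_lift_baseAndConjT _ (hk hκ)))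

theorem normal_range_lift_baseAndConjT (hφ : (φ ⟨x, mem_zpowers x⟩ : G) = y)
    (hxy : f x = f y) (hk : (FreeGroup.lift k).range = f.ker) (he : e ≠ 0)
    (hg₀ : f.range ≤ zpowers (f g₀)) (hx : f x = f g₀ ^ e) :
    (FreeGroup.lift (baseAndConjT φ k fun i : Fin e.natAbs => g₀ ^ (i : ℕ))).range.Normal := by
  have hconj := conj_t_mem_range_lift_baseAndConjT hφ hxy hk.ge he hg₀ hx
  set M := (FreeGroup.lift (baseAndConjT φ k fun i : Fin e.natAbs => g₀ ^ (i : ℕ))).range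
  refine normal_of_t_mem (by simpa using hconj 1) fun g => ?_
  suffices M ≤ M.comap (MulAut.conj (of g)).toMonoidHom from fun h hh => this hh
  refine FreeGroup.range_lift_le ?_
  rintro _ ⟨a | i, rfl⟩
  · have hka : g * k a * g⁻¹ ∈ f.ker := f.normal_ker.conj_mem _ (hk ▸ ⟨.of a, by simp⟩) g
    have := of_mem_range_lift_baseAndConjT (φ := φ) (fun i : Fin e.natAbs => g₀ ^ (i : ℕ))
      (hk ▸ hka)
    rwa [map_mul, map_mul, map_inv] at this
  · simpa [baseAndConjT, mul_assoc] using hconj (g * g₀ ^ (i : ℕ))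

theorem range_lift_baseAndConjT_sup_zpowers_eq_top (hφ : (φ ⟨x, mem_zpowers x⟩ : G) = y)
    (hxy : f x = f y) (hk : f.ker ≤ (FreeGroup.lift k).range) (he : e ≠ 0)
    (hg₀ : f.range ≤ zpowers (f g₀)) (hx : f x = f g₀ ^ e) :
    (FreeGroup.lift (baseAndConjT φ k fun i : Fin e.natAbs => g₀ ^ (i : ℕ))).range ⊔
      zpowers (of g₀) = ⊤ := by
  rw [eq_top_iff']
  intro h
  induction h using induction_on with
  | of g =>
    obtain ⟨z, hz⟩ := mem_zpowers_iff.1 (hg₀ ⟨g, rfl⟩)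
    have hgz : g * g₀ ^ (-z) ∈ f.ker := by simp [← hz]
    have : (of g : HNNExtension G (zpowers x) (zpowers y) φ) =
        of (g * g₀ ^ (-z)) * of g₀ ^ z := by simp
    rw [this]
    exact mul_mem_sup (of_mem_range_lift_baseAndConjT _ (hk hgz)) (zpow_mem (mem_zpowers _) z)
  | t =>
    exact mem_sup_left (by simpa using conj_t_mem_range_lift_baseAndConjT hφ hxy hk he hg₀ hx 1)
  | mul a b ha hb => exact mul_mem ha hb
  | inv a ha => exact inv_mem ha

theorem range_lift_baseAndConjT_eq_ker [IsMulTorsionFree Q]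
    (hφ : (φ ⟨x, mem_zpowers x⟩ : G) = y)
    {f' : HNNExtension G (zpowers x) (zpowers y) φ →* Q} (hf' : f'.comp of = f) (hf't : f' t = 1)
    (hxy : f x = f y) (hk : (FreeGroup.lift k).range = f.ker) (hg₀ : f.range ≤ zpowers (f g₀))
    (hx : f x = f g₀ ^ e) (hx1 : f x ≠ 1) :
    (FreeGroup.lift (baseAndConjT φ k fun i : Fin e.natAbs => g₀ ^ (i : ℕ))).range = f'.ker := by
  have he : e ≠ 0 := by rintro rfl; exact hx1 (by rw [hx, zpow_zero])
  have hof : ∀ g, f' (of g) = f g := fun g => DFunLike.congr_fun hf' g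
  have := normal_range_lift_baseAndConjT hφ hxy hk he hg₀ hx
  refine eq_ker_of_sup_zpowers_eq_top (FreeGroup.range_lift_le ?_) ?_
    (range_lift_baseAndConjT_sup_zpowers_eq_top hφ hxy hk.ge he hg₀ hx)
  · rintro _ ⟨a | i, rfl⟩
    · exact (hof _).trans (hk ▸ ⟨.of a, by simp⟩ : k a ∈ f.ker)
    · simp [baseAndConjT, hof, hf't]
  · rw [hof]
    rintro h1
    exact hx1 (by rw [hx, h1, one_zpow])

theorem injective_lift_baseAndConjT_pow [IsMulTorsionFree Q] (hxy : f x = f y)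
    (hk : Function.Injective (FreeGroup.lift k)) (hkf : (FreeGroup.lift k).range ≤ f.ker)
    (hx : f x = f g₀ ^ e) (hx1 : f x ≠ 1) :
    Function.Injective
      (FreeGroup.lift (baseAndConjT φ k fun i : Fin e.natAbs => g₀ ^ (i : ℕ))) := by
  refine injective_lift_baseAndConjT hk fun i j w u h => ?_
  obtain ⟨hij, hw⟩ := f.eq_and_eq_one_of_mem_toSubgroup hx hx1 hxy (hkf ⟨w, rfl⟩) i.2 j.2 h
  exact ⟨Fin.ext hij, hk (hw.trans (map_one _).symm)⟩

end HNNExtension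

open HNNExtension in
/-- The HNN-extension step in Theorem 2.1: an HNN extension of a (finite rank free)-by-ℤ
group identifying two infinite cyclic subgroups whose generators have equal nonzero image
under the homomorphism to ℤ is again (finite rank free)-by-ℤ. -/
theorem hnn_free_by_Z {G : Type} [Group G] (χ : G →* Multiplicative ℤ)
    (hker : ∃ n : ℕ, Nonempty (χ.ker ≃* FreeGroup (Fin n)))
    (x y : G) (hxy : χ x = χ y) (hx : χ x ≠ 1)
    (φ : (Subgroup.zpowers x) ≃* (Subgroup.zpowers y))
    (hφ : (φ ⟨x, Subgroup.mem_zpowers x⟩ : G) = y) :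
    ∃ χ' : HNNExtension G (Subgroup.zpowers x) (Subgroup.zpowers y) φ →* Multiplicative ℤ,
      χ'.comp HNNExtension.of = χ ∧
      ∃ n : ℕ, Nonempty (χ'.ker ≃* FreeGroup (Fin n)) := by
  obtain ⟨n, ⟨eK⟩⟩ := hker
  obtain ⟨g₀, hg₀⟩ := χ.exists_range_eq_zpowers
  obtain ⟨e, he⟩ := mem_zpowers_iff.1 (hg₀ ▸ ⟨x, rfl⟩ : χ x ∈ zpowers (χ g₀))
  have hχφ : ∀ a : zpowers x, 1 * χ a = χ (φ a) * 1 := fun a => by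
    rw [one_mul, mul_one, map_coe_equiv hφ hxy]
  let χ' := lift χ 1 hχφ
  have hχ' : χ'.comp of = χ := MonoidHom.ext (lift_of χ 1 hχφ)
  let k : Fin n → G := fun a => eK.symm (.of a)
  have hk : FreeGroup.lift k = χ.ker.subtype.comp eK.symm.toMonoidHom :=
    FreeGroup.ext_hom _ _ fun _ => by simp [k]
  have hkχ : (FreeGroup.lift k).range = χ.ker := by
    rw [hk, MonoidHom.range_comp, MonoidHom.range_eq_top_of_surjective _ eK.symm.surjective,
      ← MonoidHom.range_eq_map, range_subtype]
  have hinj := injective_lift_baseAndConjT_pow (φ := φ) hxy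
    (hk ▸ Subtype.val_injective.comp eK.symm.injective) hkχ.le he.symm hx
  refine ⟨χ', hχ', n + e.natAbs, ⟨?_⟩⟩
  exact (MulEquiv.subgroupCongr (range_lift_baseAndConjT_eq_ker hφ hχ' (lift_t χ 1 hχφ) hxy hkχ
    hg₀.le he.symm hx)).symm.trans
      ((MonoidHom.ofInjective hinj).symm.trans (FreeGroup.freeGroupCongr finSumFinEquiv))
end

section
/- Let i, j, k, l be integers with (i,j) ≠ (0,0) and (k,l) ≠ (0,0). Then the group G presented by generators x, y, a, b and relators xy = yx, ab = ba, xⁱyʲ = aᵏbˡ is free-by-ℤ: there exists a normal subgroup N of G isomorphic to a free group of finite rank such that G/N is isomorphic to ℤ. -/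
/-- Generators `x, y, a, b` of the two-vertex tubular group. -/
def x3 : FreeGroup (Fin 4) := FreeGroup.of 0
def y3 : FreeGroup (Fin 4) := FreeGroup.of 1
def a3 : FreeGroup (Fin 4) := FreeGroup.of 2
def b3 : FreeGroup (Fin 4) := FreeGroup.of 3

/-- Relators `xy = yx`, `ab = ba`, `xⁱyʲ = aᵏbˡ`. -/
def rels3 (i j k l : ℤ) : Set (FreeGroup (Fin 4)) :=
  {x3 * y3 * (y3 * x3)⁻¹, a3 * b3 * (b3 * a3)⁻¹, x3 ^ i * y3 ^ j * (a3 ^ k * b3 ^ l)⁻¹}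

/-!
Changing bases of the two vertex groups `ℤ²` by Bézout turns the edge relation into `xᵈ = aᵉ`
with `d = gcd(i, j)` and `e = gcd(k, l)`. For this standard form, the kernel of the character
`x ↦ e, y ↦ 1, a ↦ d, b ↦ 1` is generated by `U_s = yˢ x y⁻ˢ⁻ᵉ`, `Z_s = yˢ b y⁻ˢ⁻¹` and
`W_s = yˢ a y⁻ˢ⁻ᵈ` (`s ∈ ℤ`), and the relators, conjugated by powers of `y`, become
`U_s = U_0`, `Z_{s+d} = W_s⁻¹ Z_s W_{s+1}` and `W_s W_{s+d} ⋯ W_{s+(e-1)d} = U_0ᵈ`. These solve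
for every generator in terms of `U_0`, `Z_0, …, Z_{d-1}`, `W_0, …, W_{d(e-1)-1}`, which are free,
so the group is the mapping torus of the automorphism "conjugation by `y`" (index shift) of a free
group of rank `1 + de`; its inverse is written down explicitly.
-/

def IsFreeByCyclic (G : Type*) [Group G] : Prop :=
  ∃ N : Subgroup G, N.Normal ∧ (∃ n : ℕ, Nonempty (N ≃* FreeGroup (Fin n))) ∧
    ∃ χ : G →* Multiplicative ℤ, Function.Surjective χ ∧ χ.ker = N

theorem IsFreeByCyclic.of_mulEquiv {G H : Type*} [Group G] [Group H] (e : G ≃* H)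
    (hH : IsFreeByCyclic H) : IsFreeByCyclic G := by
  obtain ⟨N, -, ⟨n, ⟨f⟩⟩, χ, hχ, rfl⟩ := hH
  refine ⟨_, inferInstance, ⟨n, ⟨?_⟩⟩, χ.comp e.toMonoidHom, hχ.comp e.surjective, rfl⟩
  rw [← MonoidHom.comap_ker]
  exact (Subgroup.equivMapOfInjective _ _ e.injective).trans
    ((MulEquiv.subgroupCongr (Subgroup.map_comap_eq_self_of_surjective e.surjective _)).trans f)

theorem isFreeByCyclic_semidirectProduct {ι : Type*} [Finite ι]
    (φ : Multiplicative ℤ →* MulAut (FreeGroup ι)) :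
    IsFreeByCyclic (FreeGroup ι ⋊[φ] Multiplicative ℤ) :=
  ⟨_, inferInstance,
    ⟨_, ⟨(MulEquiv.subgroupCongr SemidirectProduct.range_inl_eq_ker_rightHom.symm).trans
      ((MonoidHom.ofInjective SemidirectProduct.inl_injective).symm.trans
        (FreeGroup.freeGroupCongr (Finite.equivFin ι)))⟩⟩,
    _, SemidirectProduct.rightHom_surjective, rfl⟩

namespace Int

theorem gcdA_mul_add_gcdB_mul (i j : ℤ) : i.gcdA j * i + i.gcdB j * j = i.gcd j := by
  rw [gcd_eq_gcd_ab]; ring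

theorem neg_ediv_gcd_mul_add_ediv_gcd_mul (i j : ℤ) :
    -(j / i.gcd j) * i + i / i.gcd j * j = 0 := by
  have hi := Int.ediv_mul_cancel (gcd_dvd_left i j)
  have hj := Int.ediv_mul_cancel (gcd_dvd_right i j)
  linear_combination (j / i.gcd j) * hi - (i / i.gcd j) * hj

theorem ediv_gcd_mul_gcdA_add_ediv_gcd_mul_gcdB {i j : ℤ} (h : i.gcd j ≠ 0) :
    i / i.gcd j * i.gcdA j + j / i.gcd j * i.gcdB j = 1 := by
  apply mul_left_cancel₀ (natCast_ne_zero.mpr h)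
  rw [mul_add, ← mul_assoc, ← mul_assoc, Int.mul_ediv_cancel' (gcd_dvd_left i j),
    Int.mul_ediv_cancel' (gcd_dvd_right i j), mul_one, gcd_eq_gcd_ab]

end Int

namespace Commute

variable {G : Type*} [Group G] {g h : G}

theorem zpow_mul_zpow_zpow (hc : Commute g h) (a b n : ℤ) :
    (g ^ a * h ^ b) ^ n = g ^ (a * n) * h ^ (b * n) := by
  rw [(hc.zpow_zpow a b).mul_zpow, ← zpow_mul, ← zpow_mul]

theorem zpow_mul_zpow_mul_zpow_mul_zpow (hc : Commute g h) (a b c f : ℤ) :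
    g ^ a * h ^ b * (g ^ c * h ^ f) = g ^ (a + c) * h ^ (b + f) := by
  rw [zpow_add, zpow_add, mul_assoc, ← mul_assoc (h ^ b), (hc.zpow_zpow c b).symm.eq]
  group

theorem commute_zpow_mul_zpow (hc : Commute g h) (a b c f : ℤ) :
    Commute (g ^ a * h ^ b) (g ^ c * h ^ f) := by
  rw [Commute, SemiconjBy, hc.zpow_mul_zpow_mul_zpow_mul_zpow,
    hc.zpow_mul_zpow_mul_zpow_mul_zpow, add_comm a, add_comm b]

theorem zpow_mul_zpow_linear (hc : Commute g h) (a b c f m n : ℤ) :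
    (g ^ a * h ^ b) ^ m * (g ^ c * h ^ f) ^ n = g ^ (a * m + c * n) * h ^ (b * m + f * n) := by
  rw [hc.zpow_mul_zpow_zpow, hc.zpow_mul_zpow_zpow, hc.zpow_mul_zpow_mul_zpow_mul_zpow]

theorem zpow_mul_zpow_linear_eq_left (hc : Commute g h) {a b c f m n : ℤ}
    (h₁ : a * m + c * n = 1) (h₀ : b * m + f * n = 0) :
    (g ^ a * h ^ b) ^ m * (g ^ c * h ^ f) ^ n = g := by
  rw [hc.zpow_mul_zpow_linear, h₁, h₀, zpow_one, zpow_zero, mul_one]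

theorem zpow_mul_zpow_linear_eq_right (hc : Commute g h) {a b c f m n : ℤ}
    (h₀ : a * m + c * n = 0) (h₁ : b * m + f * n = 1) :
    (g ^ a * h ^ b) ^ m * (g ^ c * h ^ f) ^ n = h := by
  rw [hc.zpow_mul_zpow_linear, h₁, h₀, zpow_one, zpow_zero, one_mul]

end Commute

theorem List.prod_range_zpow_mul_mul_zpow {G : Type*} [Group G] (g h : G) (c : ℤ) (k : ℕ) :
    ((List.range k).map fun r : ℕ => g ^ ((r : ℤ) * c) * h * g ^ (-((r : ℤ) * c) - c)).prod =
      h ^ (k : ℤ) * g ^ (-(k : ℤ) * c) := by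
  induction k with
  | zero => simp
  | succ k ih =>
    rw [List.range_succ, List.map_append, List.prod_append, ih]
    simp only [List.map_cons, List.map_nil, List.prod_cons, List.prod_nil, mul_one]
    push_cast
    group

theorem MulAut.zpow_apply_eq_self {M : Type*} [Group M] {α : MulAut M} {x : M} (h : α x = x)
    (k : ℤ) : (α ^ k) x = x := by
  have := Equiv.Perm.zpow_apply_eq_self_of_apply_eq_self (f := MulAut.toPerm M α) h k
  rwa [← map_zpow] at this

theorem MonoidHom.apply_zpow_apply_eq_conj {N H : Type*} [Group N] [Group H] (θ : N →* H)
    {α : MulAut N} {h : H} (hθ : ∀ x, θ (α x) = h * θ x * h⁻¹) (k : ℤ) (x : N) :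
    θ ((α ^ k) x) = h ^ k * θ x * (h ^ k)⁻¹ := by
  induction k using Int.induction_on generalizing x with
  | zero => simp
  | succ k ih =>
    rw [zpow_add_one, MulAut.mul_apply, ih, hθ]
    group
  | pred k ih =>
    have hinv : θ (α⁻¹ x) = h⁻¹ * θ x * h := by
      have := hθ (α⁻¹ x)
      rw [MulAut.apply_inv_self] at this
      rw [this]
      group
    rw [zpow_sub_one, MulAut.mul_apply, ih, hinv]
    group

namespace SemidirectProduct

variable {N G : Type*} [Group N] [Group G] {φ : G →* MulAut N}

theorem mk_pow (n : N) (g : G) (k : ℕ) :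
    (⟨n, g⟩ : N ⋊[φ] G) ^ k = ⟨((List.range k).map fun r => φ (g ^ r) n).prod, g ^ k⟩ := by
  induction k with
  | zero => rw [pow_zero, pow_zero]; rfl
  | succ k ih =>
    rw [pow_succ, ih, mul_def]
    simp [List.range_succ, pow_succ]

theorem inr_mul_mk_mul_inr {g h g' : G} (hg : g * h * g' = 1) (m : N) :
    inr g * (⟨m, h⟩ : N ⋊[φ] G) * inr g' = inl (φ g m) := by
  ext <;> simp [hg]

theorem mk_mul_inr {h g' : G} (hg : h * g' = 1) (m : N) :
    (⟨m, h⟩ : N ⋊[φ] G) * inr g' = inl m := by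
  ext <;> simp [hg]

end SemidirectProduct

abbrev TubularGroup (i j k l : ℤ) := PresentedGroup (rels3 i j k l)

namespace TubularGroup

variable {i j k l : ℤ}

def x : TubularGroup i j k l := PresentedGroup.of 0
def y : TubularGroup i j k l := PresentedGroup.of 1
def a : TubularGroup i j k l := PresentedGroup.of 2
def b : TubularGroup i j k l := PresentedGroup.of 3

theorem commute_x_y : Commute (x : TubularGroup i j k l) y := by
  have h := PresentedGroup.mk_eq_mk_of_mul_inv_mem (rels := rels3 i j k l)
    (x := x3 * y3) (y := y3 * x3) (Or.inl rfl)
  rwa [map_mul, map_mul] at h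

theorem commute_a_b : Commute (a : TubularGroup i j k l) b := by
  have h := PresentedGroup.mk_eq_mk_of_mul_inv_mem (rels := rels3 i j k l)
    (x := a3 * b3) (y := b3 * a3) (Or.inr (Or.inl rfl))
  rwa [map_mul, map_mul] at h

theorem x_zpow_mul_y_zpow : (x : TubularGroup i j k l) ^ i * y ^ j = a ^ k * b ^ l := by
  have h := PresentedGroup.mk_eq_mk_of_mul_inv_mem (rels := rels3 i j k l)
    (x := x3 ^ i * y3 ^ j) (y := a3 ^ k * b3 ^ l) (Or.inr (Or.inr rfl))
  rwa [map_mul, map_mul, map_zpow, map_zpow, map_zpow, map_zpow] at h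

variable {H : Type*} [Group H]

def lift (gx gy ga gb : H) (hxy : Commute gx gy) (hab : Commute ga gb)
    (hrel : gx ^ i * gy ^ j = ga ^ k * gb ^ l) : TubularGroup i j k l →* H :=
  PresentedGroup.toGroup (f := ![gx, gy, ga, gb]) <| by
    rintro r (rfl | rfl | rfl) <;> simp [x3, y3, a3, b3, hxy.eq, hab.eq, hrel]

section Lift

variable {gx gy ga gb : H} {hxy : Commute gx gy} {hab : Commute ga gb}
  {hrel : gx ^ i * gy ^ j = ga ^ k * gb ^ l}

@[simp] theorem lift_x : lift gx gy ga gb hxy hab hrel x = gx := PresentedGroup.toGroup.of _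
@[simp] theorem lift_y : lift gx gy ga gb hxy hab hrel y = gy := PresentedGroup.toGroup.of _
@[simp] theorem lift_a : lift gx gy ga gb hxy hab hrel a = ga := PresentedGroup.toGroup.of _
@[simp] theorem lift_b : lift gx gy ga gb hxy hab hrel b = gb := PresentedGroup.toGroup.of _

end Lift

theorem hom_ext {f f' : TubularGroup i j k l →* H} (hx : f x = f' x) (hy : f y = f' y)
    (ha : f a = f' a) (hb : f b = f' b) : f = f' :=
  PresentedGroup.ext fun s => by fin_cases s <;> assumption

abbrev Standard (d e : ℕ) := TubularGroup d 0 e 0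

theorem Standard.x_pow_eq_a_pow {d e : ℕ} : (x : Standard d e) ^ d = a ^ e := by
  simpa using (x_zpow_mul_y_zpow : (x : Standard d e) ^ (d : ℤ) * y ^ (0 : ℤ) = _)

/-- With `g = gcd i j = i A + j B` (Bézout), `x^{i/g} y^{j/g}` and `x^{-B} yᴬ` form a basis of
`⟨x, y⟩ ≅ ℤ²` in which `xⁱ yʲ` is the `g`-th power of the first vector; likewise in `⟨a, b⟩`. -/
def ofStandard : Standard (i.gcd j) (k.gcd l) →* TubularGroup i j k l :=
  lift (x ^ (i / i.gcd j) * y ^ (j / i.gcd j)) (x ^ (-i.gcdB j) * y ^ i.gcdA j)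
    (a ^ (k / k.gcd l) * b ^ (l / k.gcd l)) (a ^ (-k.gcdB l) * b ^ k.gcdA l)
    (commute_x_y.commute_zpow_mul_zpow ..) (commute_a_b.commute_zpow_mul_zpow ..) <| by
      rw [commute_x_y.zpow_mul_zpow_linear, commute_a_b.zpow_mul_zpow_linear]
      convert x_zpow_mul_y_zpow using 3 <;>
        simp [Int.ediv_mul_cancel, Int.gcd_dvd_left, Int.gcd_dvd_right]

def toStandard : TubularGroup i j k l →* Standard (i.gcd j) (k.gcd l) :=
  lift (x ^ i.gcdA j * y ^ (-(j / i.gcd j))) (x ^ i.gcdB j * y ^ (i / i.gcd j))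
    (a ^ k.gcdA l * b ^ (-(l / k.gcd l))) (a ^ k.gcdB l * b ^ (k / k.gcd l))
    (commute_x_y.commute_zpow_mul_zpow ..) (commute_a_b.commute_zpow_mul_zpow ..) <| by
      rw [commute_x_y.zpow_mul_zpow_linear, commute_a_b.zpow_mul_zpow_linear]
      convert x_zpow_mul_y_zpow using 3
      exacts [Int.gcdA_mul_add_gcdB_mul i j, Int.neg_ediv_gcd_mul_add_ediv_gcd_mul i j,
        Int.gcdA_mul_add_gcdB_mul k l, Int.neg_ediv_gcd_mul_add_ediv_gcd_mul k l]

def equivStandard (hij : i.gcd j ≠ 0) (hkl : k.gcd l ≠ 0) :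
    TubularGroup i j k l ≃* Standard (i.gcd j) (k.gcd l) := by
  have bij := Int.ediv_gcd_mul_gcdA_add_ediv_gcd_mul_gcdB hij
  have bkl := Int.ediv_gcd_mul_gcdA_add_ediv_gcd_mul_gcdB hkl
  refine MonoidHom.toMulEquiv toStandard ofStandard (hom_ext ?_ ?_ ?_ ?_)
    (hom_ext ?_ ?_ ?_ ?_) <;>
    simp only [toStandard, ofStandard, MonoidHom.comp_apply, MonoidHom.id_apply, map_mul,
      map_zpow, lift_x, lift_y, lift_a, lift_b]
  · exact commute_x_y.zpow_mul_zpow_linear_eq_left (by linear_combination bij) (by ring)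
  · exact commute_x_y.zpow_mul_zpow_linear_eq_right (by ring) (by linear_combination bij)
  · exact commute_a_b.zpow_mul_zpow_linear_eq_left (by linear_combination bkl) (by ring)
  · exact commute_a_b.zpow_mul_zpow_linear_eq_right (by ring) (by linear_combination bkl)
  · exact commute_x_y.zpow_mul_zpow_linear_eq_left (by linear_combination bij) (by ring)
  · exact commute_x_y.zpow_mul_zpow_linear_eq_right (by ring) (by linear_combination bij)
  · exact commute_a_b.zpow_mul_zpow_linear_eq_left (by linear_combination bkl) (by ring)
  · exact commute_a_b.zpow_mul_zpow_linear_eq_right (by ring) (by linear_combination bkl)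

section Fiber

variable (d n : ℕ)

/-- The free group on `U, Z_s (s < d), W_s (s < dn)`, the kernel of `Standard d (n + 1) → ℤ`
(see `fiberToStandard`). -/
abbrev Fiber := FreeGroup (Unit ⊕ Fin d ⊕ Fin (d * n))

variable {d n}

def uGen : Fiber d n := .of (.inl ())

def zGen (s : ℕ) : Fiber d n := if h : s < d then .of (.inr (.inl ⟨s, h⟩)) else 1

def wGen (s : ℕ) : Fiber d n := if h : s < d * n then .of (.inr (.inr ⟨s, h⟩)) else 1

/-- `W_{dn}`, solved from `W₀ W_d ⋯ W_{dn} = Uᵈ`. -/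
def wTop : Fiber d n := ((List.range n).map fun r => wGen (r * d)).prod⁻¹ * uGen ^ d

/-- `W_{-1}`, solved from `W_{-1} W_{d-1} ⋯ W_{dn-1} = Uᵈ`. -/
def wBot : Fiber d n := uGen ^ d * ((List.range n).map fun r => wGen (r * d + d - 1)).prod⁻¹

/-- `W_s` for `0 ≤ s ≤ dn`; when `n = 0` every `W_s` is `Uᵈ`. -/
def wAt (s : ℕ) : Fiber d n := if s < d * n then wGen s else wTop

/-- `Z_s` for `0 ≤ s ≤ d`, with `Z_d` solved from `Z_{s+d} = W_s⁻¹ Z_s W_{s+1}`. -/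
def zAt (s : ℕ) : Fiber d n := if s < d then zGen s else (wAt 0)⁻¹ * zGen 0 * wAt 1

/-- `Z_{-1}`, solved from the same relation. -/
def zBot : Fiber d n := wBot * zGen (d - 1) * (wAt 0)⁻¹

theorem zGen_of_lt {s : ℕ} (h : s < d) : (zGen s : Fiber d n) = .of (.inr (.inl ⟨s, h⟩)) :=
  dif_pos h

theorem wGen_of_lt {s : ℕ} (h : s < d * n) :
    (wGen s : Fiber d n) = .of (.inr (.inr ⟨s, h⟩)) :=
  dif_pos h

theorem uGen_val (u : Unit) : (uGen : Fiber d n) = .of (.inl u) := rfl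

theorem zGen_val (s : Fin d) : (zGen s : Fiber d n) = .of (.inr (.inl s)) := dif_pos s.isLt

theorem wGen_val (s : Fin (d * n)) : (wGen s : Fiber d n) = .of (.inr (.inr s)) := dif_pos s.isLt

theorem zAt_of_lt {s : ℕ} (h : s < d) : (zAt s : Fiber d n) = zGen s := if_pos h

theorem zAt_self : (zAt d : Fiber d n) = (wAt 0)⁻¹ * zGen 0 * wAt 1 := if_neg (lt_irrefl d)

theorem wAt_of_lt {s : ℕ} (h : s < d * n) : (wAt s : Fiber d n) = wGen s := if_pos h

theorem wAt_of_le {s : ℕ} (h : d * n ≤ s) : (wAt s : Fiber d n) = wTop := if_neg h.not_gt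

theorem prod_wAt [NeZero d] :
    ((List.range (n + 1)).map fun r => (wAt (r * d) : Fiber d n)).prod = uGen ^ d := by
  have hlt : ∀ r ∈ List.range n, (wAt (r * d) : Fiber d n) = wGen (r * d) := fun r hr =>
    wAt_of_lt (mul_comm d n ▸ Nat.mul_lt_mul_of_pos_right (List.mem_range.1 hr) (NeZero.pos d))
  rw [List.range_succ, List.map_append, List.prod_append, List.map_congr_left hlt,
    List.map_singleton, List.prod_singleton, wAt_of_le (mul_comm d n).le, wTop,
    mul_inv_cancel_left]

end Fiber

section Monodromy

variable {d n : ℕ}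

def monodromyHom (d n : ℕ) : Fiber d n →* Fiber d n := FreeGroup.lift fun
  | .inl _ => uGen
  | .inr (.inl s) => zAt (s + 1)
  | .inr (.inr s) => wAt (s + 1)

def monodromyInvHom (d n : ℕ) : Fiber d n →* Fiber d n := FreeGroup.lift fun
  | .inl _ => uGen
  | .inr (.inl s) => if (s : ℕ) = 0 then zBot else zGen (s - 1)
  | .inr (.inr s) => if (s : ℕ) = 0 then wBot else wGen (s - 1)

@[simp] theorem monodromyHom_uGen : monodromyHom d n uGen = uGen :=
  FreeGroup.lift_apply_of

@[simp] theorem monodromyInvHom_uGen : monodromyInvHom d n uGen = uGen :=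
  FreeGroup.lift_apply_of

theorem monodromyHom_zGen {s : ℕ} (h : s < d) : monodromyHom d n (zGen s) = zAt (s + 1) := by
  rw [zGen_of_lt h]; exact FreeGroup.lift_apply_of

theorem monodromyHom_wGen {s : ℕ} (h : s < d * n) : monodromyHom d n (wGen s) = wAt (s + 1) := by
  rw [wGen_of_lt h]; exact FreeGroup.lift_apply_of

theorem monodromyInvHom_zGen {s : ℕ} (h : s < d) :
    monodromyInvHom d n (zGen s) = if s = 0 then zBot else zGen (s - 1) := by
  rw [zGen_of_lt h]; exact FreeGroup.lift_apply_of

theorem monodromyInvHom_wGen {s : ℕ} (h : s < d * n) :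
    monodromyInvHom d n (wGen s) = if s = 0 then wBot else wGen (s - 1) := by
  rw [wGen_of_lt h]; exact FreeGroup.lift_apply_of

theorem monodromyHom_uGen_pow (k : ℕ) : monodromyHom d n (uGen ^ k) = uGen ^ k := by
  rw [map_pow, monodromyHom_uGen]

theorem wTop_of_mul_eq_zero (h : d * n = 0) : (wTop : Fiber d n) = uGen ^ d := by
  rcases Nat.mul_eq_zero.1 h with rfl | h
  · simp [wTop, wGen]
  · simp [wTop, h]

theorem monodromyHom_wAt {s : ℕ} (h : s < d * n ∨ d * n = 0) :
    monodromyHom d n (wAt s) = wAt (s + 1) := by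
  rcases h with h | h
  · rw [wAt_of_lt h, monodromyHom_wGen h]
  · rw [wAt_of_le (h ▸ s.zero_le), wAt_of_le (h ▸ (s + 1).zero_le), wTop_of_mul_eq_zero h,
      monodromyHom_uGen_pow]

variable [NeZero d]

theorem monodromyHom_wBot : monodromyHom d n wBot = wAt 0 := by
  have hprod := prod_wAt (d := d) (n := n)
  have hd := NeZero.pos d
  have hshift : ∀ r ∈ List.range n,
      monodromyHom d n (wGen (r * d + d - 1)) = wAt ((r + 1) * d) := by
    intro r hr
    have hle : (r + 1) * d ≤ n * d := Nat.mul_le_mul_right d (List.mem_range.1 hr)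
    rw [add_one_mul, mul_comm n] at hle
    rw [monodromyHom_wGen (by omega)]
    congr 1
    rw [add_one_mul]
    omega
  -- `W_{-1} ↦ Uᵈ (W_d W_{2d} ⋯ W_{dn})⁻¹`, which is `W₀` by `prod_wAt`
  rw [List.range_succ_eq_map, List.map_cons, List.prod_cons, List.map_map] at hprod
  rw [wBot, map_mul, map_inv, monodromyHom_uGen_pow, map_list_prod, List.map_map,
    Function.comp_def, List.map_congr_left hshift, ← hprod]
  simp only [Function.comp_def, Nat.succ_eq_add_one, zero_mul]
  group

theorem monodromyInvHom_wTop {s : ℕ} (hs : s + 1 = d * n) :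
    monodromyInvHom d n wTop = wGen s := by
  have hd := NeZero.pos d
  obtain ⟨n, rfl⟩ : ∃ n', n = n' + 1 :=
    ⟨n - 1, by have := Nat.pos_of_mul_pos_left (by omega : 0 < d * n); omega⟩
  have hshift : ∀ r ∈ List.range n,
      monodromyInvHom d (n + 1) (wGen ((r + 1) * d)) = wGen (r * d + d - 1) := by
    intro r hr
    have hle : (r + 1) * d ≤ n * d := Nat.mul_le_mul_right d (List.mem_range.1 hr)
    rw [mul_comm n] at hle
    rw [monodromyInvHom_wGen (by rw [mul_add_one]; omega), if_neg (by positivity), add_one_mul]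
  rw [wTop, map_mul, map_inv, map_pow, monodromyInvHom_uGen, map_list_prod,
    List.range_succ_eq_map, List.map_cons, List.map_cons, List.prod_cons, zero_mul,
    monodromyInvHom_wGen (by positivity), if_pos rfl, List.map_map, List.map_map]
  simp only [Function.comp_def, Nat.succ_eq_add_one]
  rw [List.map_congr_left hshift, wBot, List.range_succ, List.map_append, List.prod_append,
    List.map_singleton, List.prod_singleton,
    show n * d + d - 1 = s by rw [mul_add_one, mul_comm d] at hs; omega]
  group

theorem wBot_of_mul_eq_zero (h : d * n = 0) : (wBot : Fiber d n) = uGen ^ d := by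
  simp [wBot, (Nat.mul_eq_zero.1 h).resolve_left (NeZero.ne d)]

theorem monodromyInvHom_wAt_zero : monodromyInvHom d n (wAt 0) = wBot := by
  rcases (d * n).eq_zero_or_pos with h | h
  · rw [wAt_of_le h.le, wTop_of_mul_eq_zero h, wBot_of_mul_eq_zero h, map_pow,
      monodromyInvHom_uGen]
  · rw [wAt_of_lt h, monodromyInvHom_wGen h, if_pos rfl]

theorem monodromyInvHom_wAt_succ {s : ℕ} (h : s < d * n ∨ d * n = 0) :
    monodromyInvHom d n (wAt (s + 1)) = wAt s := by
  rcases h with h | h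
  · rcases Nat.lt_or_ge (s + 1) (d * n) with h' | h'
    · rw [wAt_of_lt h', monodromyInvHom_wGen h', if_neg s.succ_ne_zero, Nat.add_sub_cancel,
        wAt_of_lt h]
    · rw [wAt_of_le h', monodromyInvHom_wTop (s := s) (by omega), wAt_of_lt h]
  · rw [wAt_of_le (h ▸ (s + 1).zero_le), wAt_of_le (h ▸ s.zero_le), wTop_of_mul_eq_zero h,
      map_pow, monodromyInvHom_uGen]

theorem monodromyInvHom_comp_monodromyHom :
    (monodromyInvHom d n).comp (monodromyHom d n) = MonoidHom.id _ := by
  ext (u | s | s) <;> simp only [MonoidHom.comp_apply, MonoidHom.id_apply]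
  · rw [← uGen_val, monodromyHom_uGen, monodromyInvHom_uGen]
  · rw [← zGen_val, monodromyHom_zGen s.isLt]
    rcases Nat.lt_or_ge (s + 1) d with h | h
    · rw [zAt_of_lt h, monodromyInvHom_zGen h, if_neg s.val.succ_ne_zero, Nat.add_sub_cancel]
    · rw [show (s : ℕ) + 1 = d by omega, zAt_self, map_mul, map_mul, map_inv,
        monodromyInvHom_wAt_zero, monodromyInvHom_zGen (NeZero.pos d), if_pos rfl,
        monodromyInvHom_wAt_succ (d * n).eq_zero_or_pos.symm, zBot, show (s : ℕ) = d - 1 by omega]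
      group
  · rw [← wGen_val, ← wAt_of_lt s.isLt, monodromyHom_wAt (.inl s.isLt),
      monodromyInvHom_wAt_succ (.inl s.isLt), wAt_of_lt s.isLt]

theorem monodromyHom_comp_monodromyInvHom :
    (monodromyHom d n).comp (monodromyInvHom d n) = MonoidHom.id _ := by
  ext (u | s | s) <;> simp only [MonoidHom.comp_apply, MonoidHom.id_apply]
  · rw [← uGen_val, monodromyInvHom_uGen, monodromyHom_uGen]
  · rw [← zGen_val, monodromyInvHom_zGen s.isLt]
    split_ifs with h
    · rw [zBot, map_mul, map_mul, map_inv, monodromyHom_wBot, monodromyHom_zGen (by omega),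
        Nat.sub_add_cancel NeZero.one_le, zAt_self,
        monodromyHom_wAt (d * n).eq_zero_or_pos.symm, h]
      group
    · rw [monodromyHom_zGen (by omega), Nat.sub_add_cancel (by omega), zAt_of_lt s.isLt]
  · rw [← wGen_val, monodromyInvHom_wGen s.isLt]
    split_ifs with h
    · rw [monodromyHom_wBot, wAt_of_lt (by omega), h]
    · rw [monodromyHom_wGen (by omega), Nat.sub_add_cancel (by omega), wAt_of_lt s.isLt]

variable (d n) in
def monodromy : MulAut (Fiber d n) :=
  MonoidHom.toMulEquiv _ _ monodromyInvHom_comp_monodromyHom monodromyHom_comp_monodromyInvHom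

theorem monodromy_apply (f : Fiber d n) : monodromy d n f = monodromyHom d n f := rfl

theorem monodromy_zpow_uGen (k : ℤ) : (monodromy d n ^ k) uGen = uGen :=
  MulAut.zpow_apply_eq_self monodromyHom_uGen k

theorem monodromy_pow_zGen {s : ℕ} (h : s ≤ d) : (monodromy d n ^ s) (zGen 0) = zAt s := by
  induction s with
  | zero => exact (zAt_of_lt (NeZero.pos d)).symm
  | succ s ih =>
    rw [pow_succ', MulAut.mul_apply, ih (by omega), zAt_of_lt (by omega)]
    exact monodromyHom_zGen (by omega)

theorem monodromy_pow_wAt {s : ℕ} (h : s ≤ d * n) : (monodromy d n ^ s) (wAt 0) = wAt s := by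
  induction s with
  | zero => rfl
  | succ s ih =>
    rw [pow_succ', MulAut.mul_apply, ih (by omega)]
    exact monodromyHom_wAt (.inl (by omega))

end Monodromy

section FiberToStandard

variable {d n : ℕ}

variable (d n) in
def fiberToStandard : Fiber d n →* Standard d (n + 1) := FreeGroup.lift fun
  | .inl _ => x * y ^ (-((n : ℤ) + 1))
  | .inr (.inl s) => y ^ (s : ℤ) * b * y ^ (-(s : ℤ) - 1)
  | .inr (.inr s) => y ^ (s : ℤ) * a * y ^ (-(s : ℤ) - d)

theorem fiberToStandard_uGen : fiberToStandard d n uGen = x * y ^ (-((n : ℤ) + 1)) :=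
  FreeGroup.lift_apply_of

theorem fiberToStandard_zGen {s : ℕ} (h : s < d) :
    fiberToStandard d n (zGen s) = y ^ (s : ℤ) * b * y ^ (-(s : ℤ) - 1) := by
  rw [zGen_of_lt h]; exact FreeGroup.lift_apply_of

theorem fiberToStandard_wGen {s : ℕ} (h : s < d * n) :
    fiberToStandard d n (wGen s) = y ^ (s : ℤ) * a * y ^ (-(s : ℤ) - d) := by
  rw [wGen_of_lt h]; exact FreeGroup.lift_apply_of

theorem fiberToStandard_uGen_pow :
    fiberToStandard d n (uGen ^ d) = a ^ ((n : ℤ) + 1) * y ^ (-((n : ℤ) + 1) * d) := by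
  rw [map_pow, fiberToStandard_uGen, (commute_x_y.zpow_right _).mul_pow, Standard.x_pow_eq_a_pow,
    ← zpow_natCast, ← zpow_natCast, ← zpow_mul]
  push_cast
  rfl

variable [NeZero d]

theorem fiberToStandard_wTop :
    fiberToStandard d n wTop = y ^ ((d * n : ℕ) : ℤ) * a * y ^ (-((d * n : ℕ) : ℤ) - d) := by
  have hgen : ∀ r ∈ List.range n, fiberToStandard d n (wGen (r * d)) =
      y ^ ((r : ℤ) * d) * a * y ^ (-((r : ℤ) * d) - d) := by
    intro r hr
    rw [fiberToStandard_wGen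
      (mul_comm d n ▸ Nat.mul_lt_mul_of_pos_right (List.mem_range.1 hr) (NeZero.pos d))]
    push_cast
    rfl
  rw [wTop, map_mul, map_inv, fiberToStandard_uGen_pow, map_list_prod, List.map_map,
    Function.comp_def, List.map_congr_left hgen, List.prod_range_zpow_mul_mul_zpow]
  push_cast
  group

theorem fiberToStandard_wAt {s : ℕ} (h : s ≤ d * n ∨ n = 0) :
    fiberToStandard d n (wAt s) = y ^ (s : ℤ) * a * y ^ (-(s : ℤ) - d) := by
  rcases Nat.lt_or_ge s (d * n) with hs | hs
  · rw [wAt_of_lt hs, fiberToStandard_wGen hs]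
  rw [wAt_of_le hs, fiberToStandard_wTop]
  rcases h with h | rfl
  · rw [le_antisymm h hs]
  · have hay : Commute (a : Standard d (0 + 1)) y := by
      have := (commute_x_y : Commute (x : Standard d (0 + 1)) y).pow_left d
      rwa [Standard.x_pow_eq_a_pow, zero_add, pow_one] at this
    rw [(hay.zpow_right (s : ℤ)).symm.eq, mul_zero, Nat.cast_zero, zpow_zero, one_mul]
    group

theorem fiberToStandard_zAt {s : ℕ} (h : s ≤ d) :
    fiberToStandard d n (zAt s) = y ^ (s : ℤ) * b * y ^ (-(s : ℤ) - 1) := by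
  rcases h.lt_or_eq with hs | hs
  · rw [zAt_of_lt hs, fiberToStandard_zGen hs]
  rw [hs]
  have hab : a⁻¹ * b * a = (b : Standard d (n + 1)) := by
    rw [mul_assoc, ← commute_a_b.eq, inv_mul_cancel_left]
  rw [zAt_self, map_mul, map_mul, map_inv, fiberToStandard_zGen (NeZero.pos d),
    fiberToStandard_wAt (.inl (Nat.zero_le _)), fiberToStandard_wAt ?_]
  · calc _ = y ^ (d : ℤ) * (a⁻¹ * b * a) * y ^ (-(d : ℤ) - 1) := by push_cast; group
      _ = _ := by rw [hab]
  · rcases n.eq_zero_or_pos with hn | hn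
    · exact .inr hn
    · exact .inl (Nat.mul_pos (NeZero.pos d) hn)

theorem fiberToStandard_monodromy (f : Fiber d n) :
    fiberToStandard d n (monodromy d n f) = y * fiberToStandard d n f * y⁻¹ := by
  suffices h : (fiberToStandard d n).comp (monodromyHom d n) =
      (MulAut.conj y).toMonoidHom.comp (fiberToStandard d n) from DFunLike.congr_fun h f
  ext (u | s | s) <;>
    simp only [MonoidHom.comp_apply, MulEquiv.coe_toMonoidHom, MulAut.conj_apply]
  · rw [← uGen_val, monodromyHom_uGen, fiberToStandard_uGen, ← mul_assoc, ← commute_x_y.eq]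
    group
  · rw [← zGen_val, monodromyHom_zGen s.isLt, fiberToStandard_zAt s.isLt,
      fiberToStandard_zGen s.isLt]
    push_cast
    group
  · rw [← wGen_val, ← wAt_of_lt s.isLt, monodromyHom_wAt (.inl s.isLt),
      fiberToStandard_wAt (.inl s.isLt), fiberToStandard_wAt (.inl s.isLt.le)]
    push_cast
    group

end FiberToStandard

section MappingTorus

open SemidirectProduct Multiplicative

variable {d n : ℕ} [NeZero d]

variable (d n) in
abbrev MappingTorus := Fiber d n ⋊[zpowersHom _ (monodromy d n)] Multiplicative ℤ

theorem monodromy_zpowersHom_apply (g : Multiplicative ℤ) (f : Fiber d n) :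
    zpowersHom _ (monodromy d n) g f = (monodromy d n ^ g.toAdd) f := rfl

theorem commute_mk_uGen_inr (k : ℤ) (g : Multiplicative ℤ) :
    Commute (⟨uGen, ofAdd k⟩ : MappingTorus d n) (inr g) := by
  refine SemidirectProduct.ext ?_ (mul_comm _ _)
  rw [mul_left, mul_left, monodromy_zpowersHom_apply, monodromy_zpowersHom_apply,
    monodromy_zpow_uGen]
  simp

theorem commute_mk_wAt_mk_zGen :
    Commute (⟨wAt 0, ofAdd (d : ℤ)⟩ : MappingTorus d n) ⟨zGen 0, ofAdd 1⟩ := by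
  refine SemidirectProduct.ext ?_ (mul_comm _ _)
  rw [mul_left, mul_left, monodromy_zpowersHom_apply, monodromy_zpowersHom_apply, toAdd_ofAdd,
    toAdd_ofAdd, zpow_natCast, zpow_one, monodromy_pow_zGen le_rfl, zAt_self,
    monodromy_apply, monodromyHom_wAt (d * n).eq_zero_or_pos.symm]
  group

theorem mk_uGen_pow_eq_mk_wAt_pow :
    (⟨uGen, ofAdd ((n : ℤ) + 1)⟩ : MappingTorus d n) ^ d = ⟨wAt 0, ofAdd (d : ℤ)⟩ ^ (n + 1) := by
  have hW : ∀ r ∈ List.range (n + 1),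
      zpowersHom _ (monodromy d n) (ofAdd (d : ℤ) ^ r) (wAt 0) = wAt (r * d) := by
    intro r hr
    rw [monodromy_zpowersHom_apply, toAdd_pow, toAdd_ofAdd, nsmul_eq_mul, ← Nat.cast_mul,
      zpow_natCast, monodromy_pow_wAt
        (mul_comm n d ▸ Nat.mul_le_mul_right d (Nat.lt_succ_iff.1 (List.mem_range.1 hr)))]
  rw [mk_pow, mk_pow, List.map_congr_left hW, prod_wAt]
  refine SemidirectProduct.ext ?_ ?_
  · simp [monodromy_zpow_uGen]
  · simp [← ofAdd_nsmul]

variable (d n) in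
def standardToMappingTorus : Standard d (n + 1) →* MappingTorus d n :=
  lift ⟨uGen, ofAdd ((n : ℤ) + 1)⟩ (inr (ofAdd 1)) ⟨wAt 0, ofAdd (d : ℤ)⟩ ⟨zGen 0, ofAdd 1⟩
    (commute_mk_uGen_inr _ _) commute_mk_wAt_mk_zGen <| by
      rw [zpow_natCast, zpow_natCast, zpow_zero, zpow_zero, mul_one, mul_one]
      exact mk_uGen_pow_eq_mk_wAt_pow

variable (d n) in
def mappingTorusToStandard : MappingTorus d n →* Standard d (n + 1) :=
  SemidirectProduct.lift (fiberToStandard d n) (zpowersHom _ y) fun g => MonoidHom.ext fun f => by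
    simp only [MonoidHom.comp_apply, MulEquiv.coe_toMonoidHom,
      (fiberToStandard d n).apply_zpow_apply_eq_conj fiberToStandard_monodromy, zpowersHom_apply,
      MulAut.conj_apply]

theorem standardToMappingTorus_x :
    standardToMappingTorus d n x = ⟨uGen, ofAdd ((n : ℤ) + 1)⟩ := lift_x

theorem standardToMappingTorus_y_zpow (k : ℤ) :
    standardToMappingTorus d n (y ^ k) = inr (ofAdd k) := by
  rw [map_zpow, standardToMappingTorus, lift_y, ← map_zpow, ← ofAdd_zsmul, smul_eq_mul, mul_one]

theorem standardToMappingTorus_a : standardToMappingTorus d n a = ⟨wAt 0, ofAdd (d : ℤ)⟩ :=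
  lift_a

theorem standardToMappingTorus_b : standardToMappingTorus d n b = ⟨zGen 0, ofAdd 1⟩ := lift_b

theorem mappingTorusToStandard_mk (f : Fiber d n) (g : Multiplicative ℤ) :
    mappingTorusToStandard d n ⟨f, g⟩ = fiberToStandard d n f * y ^ g.toAdd := rfl

theorem mappingTorusToStandard_inl (f : Fiber d n) :
    mappingTorusToStandard d n (inl f) = fiberToStandard d n f := lift_inl _ _ _ _

theorem mappingTorusToStandard_inr (g : Multiplicative ℤ) :
    mappingTorusToStandard d n (inr g) = y ^ g.toAdd := by
  rw [mappingTorusToStandard, lift_inr, zpowersHom_apply]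

variable (d n) in
def equivMappingTorus : Standard d (n + 1) ≃* MappingTorus d n := by
  refine MonoidHom.toMulEquiv (standardToMappingTorus d n) (mappingTorusToStandard d n)
    (hom_ext ?_ ?_ ?_ ?_)
    (SemidirectProduct.hom_ext (FreeGroup.ext_hom _ _ ?_) (MonoidHom.ext_mint ?_)) <;>
    simp only [MonoidHom.comp_apply, MonoidHom.id_apply]
  · rw [standardToMappingTorus_x, mappingTorusToStandard_mk, fiberToStandard_uGen, toAdd_ofAdd]
    group
  · rw [← zpow_one y, standardToMappingTorus_y_zpow, mappingTorusToStandard_inr, toAdd_ofAdd]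
  · rw [standardToMappingTorus_a, mappingTorusToStandard_mk,
      fiberToStandard_wAt (.inl (Nat.zero_le _)), toAdd_ofAdd]
    group
  · rw [standardToMappingTorus_b, mappingTorusToStandard_mk, fiberToStandard_zGen (NeZero.pos d),
      toAdd_ofAdd]
    group
  · rintro (u | s | s)
    · rw [← uGen_val, mappingTorusToStandard_inl, fiberToStandard_uGen, map_mul,
        standardToMappingTorus_x, standardToMappingTorus_y_zpow, mk_mul_inr
          (by rw [← ofAdd_add, add_neg_cancel, ofAdd_zero])]
    · rw [← zGen_val, mappingTorusToStandard_inl, fiberToStandard_zGen s.isLt, map_mul, map_mul,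
        standardToMappingTorus_y_zpow, standardToMappingTorus_y_zpow, standardToMappingTorus_b,
        inr_mul_mk_mul_inr (by rw [← ofAdd_add, ← ofAdd_add, ← ofAdd_zero]; ring_nf),
        monodromy_zpowersHom_apply, toAdd_ofAdd,
        zpow_natCast, monodromy_pow_zGen s.isLt.le, zAt_of_lt s.isLt]
    · rw [← wGen_val, mappingTorusToStandard_inl, fiberToStandard_wGen s.isLt, map_mul, map_mul,
        standardToMappingTorus_y_zpow, standardToMappingTorus_y_zpow, standardToMappingTorus_a,
        inr_mul_mk_mul_inr (by rw [← ofAdd_add, ← ofAdd_add, ← ofAdd_zero]; ring_nf),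
        monodromy_zpowersHom_apply, toAdd_ofAdd,
        zpow_natCast, monodromy_pow_wAt s.isLt.le, wAt_of_lt s.isLt]
  · rw [mappingTorusToStandard_inr, toAdd_ofAdd, standardToMappingTorus_y_zpow]

end MappingTorus

theorem isFreeByCyclic_standard (d e : ℕ) [NeZero d] [NeZero e] :
    IsFreeByCyclic (Standard d e) := by
  obtain ⟨n, rfl⟩ : ∃ n, e = n + 1 := ⟨e - 1, (Nat.succ_pred_eq_of_ne_zero (NeZero.ne e)).symm⟩
  exact (isFreeByCyclic_semidirectProduct _).of_mulEquiv (equivMappingTorus d n)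

end TubularGroup

open TubularGroup in
/-- The two-vertex instance of Corollary 2.3: the amalgam of two copies of ℤ² over a
nontrivial cyclic subgroup is (finite rank free)-by-ℤ: it has a normal subgroup `N`
isomorphic to a free group of finite rank such that `G/N ≅ ℤ` (the latter expressed by a
surjective homomorphism onto ℤ with kernel exactly `N`). -/
theorem two_vertex_tubular_free_by_Z (i j k l : ℤ)
    (hij : (i, j) ≠ (0, 0)) (hkl : (k, l) ≠ (0, 0)) :
    ∃ N : Subgroup (PresentedGroup (rels3 i j k l)), N.Normal ∧
      (∃ n : ℕ, Nonempty (N ≃* FreeGroup (Fin n))) ∧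
      ∃ χ : PresentedGroup (rels3 i j k l) →* Multiplicative ℤ,
        Function.Surjective χ ∧ χ.ker = N := by
  have hd : i.gcd j ≠ 0 := by simpa [Int.gcd_eq_zero_iff, Prod.ext_iff] using hij
  have he : k.gcd l ≠ 0 := by simpa [Int.gcd_eq_zero_iff, Prod.ext_iff] using hkl
  have : NeZero (i.gcd j) := ⟨hd⟩
  have : NeZero (k.gcd l) := ⟨he⟩
  exact (isFreeByCyclic_standard _ _).of_mulEquiv (equivStandard hd he)
end

section
/- Let m and n be nonzero integers with |m| ≠ |n|, and let G be a group containing a subgroup isomorphic to the Baumslag–Solitar group BS(m,n), i.e., the group presented by generators a, t and the single relator t aᵐ t⁻¹ = aⁿ. Then no finite-index subgroup H of G satisfies the strongest Tits alternative; that is, every finite-index subgroup H of G contains a subgroup which neither admits a surjective homomorphism onto the free group F₂ of rank 2 nor is torsion-free abelian. -/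
/-- The Baumslag–Solitar group `BS(m,n) = ⟨a, t | t aᵐ t⁻¹ = aⁿ⟩`, with `a` the 0th and
`t` the 1st generator. -/
def BaumslagSolitar (m n : ℤ) : Type :=
  PresentedGroup ({FreeGroup.of 1 * (FreeGroup.of 0 : FreeGroup (Fin 2)) ^ m *
    (FreeGroup.of 1)⁻¹ * ((FreeGroup.of 0 : FreeGroup (Fin 2)) ^ n)⁻¹} :
      Set (FreeGroup (Fin 2)))

instance (m n : ℤ) : Group (BaumslagSolitar m n) := by
  unfold BaumslagSolitar; infer_instance

/-- A subgroup surjects the free group of rank 2. -/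
def SurjectsF2 (S : Type) [Group S] : Prop :=
  ∃ f : S →* FreeGroup (Fin 2), Function.Surjective f

/-- A group is torsion-free abelian. -/
def TorsionFreeAbelian (S : Type) [Group S] : Prop :=
  (∀ a b : S, a * b = b * a) ∧ ∀ g : S, g ≠ 1 → ∀ n : ℕ, 0 < n → g ^ n ≠ 1

/-! Pass to the finite-index subgroup `H`: some `x = tᵏ` and `y = aˡ` (`k, l > 0`) lie in `H`, and
they satisfy `x yᴹ x⁻¹ = yᴺ` with `M = mᵏ ≠ N = nᵏ`, while `y ≠ 1` because `a` has infinite order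
(it acts as a translation in the affine action of `BS(m,n)` on `ℚ`). In any group `S` generated by
such `x` and `y`, every homomorphism to a torsion-free abelian group kills `y`, so its image is
cyclic and cannot be `ℤ²`, the abelianization of `F₂`; and `S` is not torsion-free abelian since
`y ^ (M - N) = 1`. -/

open Subgroup

section ConjugateZPow

variable {G : Type*} [Group G] {x y : G} {m n : ℤ}

theorem zpow_sub_eq_one_of_conj_zpow (hc : Commute x (y ^ m)) (h : x * y ^ m * x⁻¹ = y ^ n) :
    y ^ (m - n) = 1 := by
  rw [zpow_sub, ← h, hc.eq, mul_inv_cancel_right, mul_inv_cancel]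

theorem conj_pow_zpow_pow_eq_zpow_pow (h : x * y ^ m * x⁻¹ = y ^ n) (k : ℕ) (l : ℤ) :
    x ^ k * (y ^ l) ^ m ^ k * (x ^ k)⁻¹ = (y ^ l) ^ n ^ k := by
  induction k generalizing l with
  | zero => simp
  | succ k ih =>
    have hconj : x * (y ^ l) ^ (m * m ^ k) * x⁻¹ = (y ^ (n * l)) ^ m ^ k := by
      rw [← zpow_mul, ← zpow_mul, mul_left_comm, zpow_mul y m, ← conj_zpow, h, ← zpow_mul,
        mul_assoc]
    calc x ^ (k + 1) * (y ^ l) ^ m ^ (k + 1) * (x ^ (k + 1))⁻¹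
        = x ^ k * (x * (y ^ l) ^ (m * m ^ k) * x⁻¹) * (x ^ k)⁻¹ := by
          rw [pow_succ, pow_succ', mul_inv_rev]; group
      _ = (y ^ l) ^ n ^ (k + 1) := by
          rw [hconj, ih, ← zpow_mul, ← zpow_mul, pow_succ']; ring_nf

theorem MonoidHom.map_eq_one_of_conj_zpow {C : Type*} [CommGroup C] [IsMulTorsionFree C]
    (g : G →* C) (hmn : m ≠ n) (h : x * y ^ m * x⁻¹ = y ^ n) : g y = 1 := by
  have hg : g x * g y ^ m * (g x)⁻¹ = g y ^ n := by simpa using congrArg g h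
  exact (IsMulTorsionFree.zpow_eq_one_iff_left (sub_ne_zero.2 hmn)).1
    (zpow_sub_eq_one_of_conj_zpow (Commute.all _ _) hg)

end ConjugateZPow

theorem pow_ne_pow_of_abs_ne {R : Type*} [Ring R] [LinearOrder R] [IsStrictOrderedRing R]
    {a b : R} (hab : |a| ≠ |b|) {k : ℕ} (hk : k ≠ 0) : a ^ k ≠ b ^ k := fun h ↦
  hab ((pow_left_inj₀ (abs_nonneg a) (abs_nonneg b) hk).1 (by rw [pow_abs, pow_abs, h]))

theorem isCyclic_of_surjective_of_closure_pair_eq_top {S C : Type*} [Group S] [Group C]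
    {x y : S} (hgen : closure {x, y} = ⊤) (g : S →* C) (hg : Function.Surjective g)
    (hy : g y = 1) : IsCyclic C := by
  have hle : closure {x, y} ≤ (zpowers (g x)).comap g :=
    closure_le _ |>.2 <| Set.insert_subset_iff.2
      ⟨mem_zpowers (g x), Set.singleton_subset_iff.2 (by simp [hy])⟩
  refine isCyclic_iff_exists_zpowers_eq_top.2 ⟨g x, eq_top_iff.2 fun c _ ↦ ?_⟩
  obtain ⟨s, rfl⟩ := hg c
  exact hle (hgen ▸ mem_top s)

def FreeGroup.toIntProd : FreeGroup (Fin 2) →* Multiplicative ℤ × Multiplicative ℤ :=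
  FreeGroup.lift ![(Multiplicative.ofAdd 1, 1), (1, Multiplicative.ofAdd 1)]

theorem FreeGroup.toIntProd_surjective : Function.Surjective FreeGroup.toIntProd := by
  rintro ⟨p, q⟩
  refine ⟨FreeGroup.of 0 ^ p.toAdd * FreeGroup.of 1 ^ q.toAdd, ?_⟩
  ext <;> simp [FreeGroup.toIntProd, ← ofAdd_zsmul]

theorem not_surjectsF2_of_conj_zpow {S : Type} [Group S] {x y : S} {m n : ℤ}
    (hgen : closure {x, y} = ⊤) (hmn : m ≠ n) (h : x * y ^ m * x⁻¹ = y ^ n) :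
    ¬ SurjectsF2 S := by
  rintro ⟨f, hf⟩
  let g := FreeGroup.toIntProd.comp f
  exact not_isCyclic_prod_of_infinite_nontrivial _ _ <|
    isCyclic_of_surjective_of_closure_pair_eq_top hgen g
      (FreeGroup.toIntProd_surjective.comp hf) (g.map_eq_one_of_conj_zpow hmn h)

theorem not_torsionFreeAbelian_of_conj_zpow {S : Type} [Group S] {x y : S} {m n : ℤ}
    (hy : y ≠ 1) (hmn : m ≠ n) (h : x * y ^ m * x⁻¹ = y ^ n) : ¬ TorsionFreeAbelian S := by
  rintro ⟨hcomm, htf⟩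
  exact htf y hy _ (Int.natAbs_pos.2 (sub_ne_zero.2 hmn))
    (pow_natAbs_eq_one.2 (zpow_sub_eq_one_of_conj_zpow (hcomm _ _) h))

theorem exists_subgroup_not_surjectsF2_not_torsionFreeAbelian {H : Type} [Group H] {x y : H}
    {m n : ℤ} (hy : y ≠ 1) (hmn : m ≠ n) (h : x * y ^ m * x⁻¹ = y ^ n) :
    ∃ S : Subgroup H, ¬ SurjectsF2 S ∧ ¬ TorsionFreeAbelian S := by
  let x' : closure {x, y} := ⟨x, subset_closure (by simp)⟩
  let y' : closure {x, y} := ⟨y, subset_closure (by simp)⟩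
  have hgen : closure {x', y'} = ⊤ := by
    rw [← closure_closure_coe_preimage]
    congr 1
    ext ⟨z, hz⟩
    simp [x', y']
  have h' : x' * y' ^ m * x'⁻¹ = y' ^ n := Subtype.ext h
  exact ⟨_, not_surjectsF2_of_conj_zpow hgen hmn h',
    not_torsionFreeAbelian_of_conj_zpow (by simpa [y'] using hy) hmn h'⟩

namespace BaumslagSolitar

variable {m n : ℤ}

def a : BaumslagSolitar m n := PresentedGroup.of 0

def t : BaumslagSolitar m n := PresentedGroup.of 1

theorem t_mul_a_zpow_mul_t_inv : t * a ^ m * t⁻¹ = (a ^ n : BaumslagSolitar m n) := by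
  have h : PresentedGroup.mk _ (FreeGroup.of 1 * (FreeGroup.of 0 : FreeGroup (Fin 2)) ^ m *
      (FreeGroup.of 1)⁻¹ * ((FreeGroup.of 0) ^ n)⁻¹) = (1 : BaumslagSolitar m n) :=
    (QuotientGroup.eq_one_iff _).mpr (subset_normalClosure (Set.mem_singleton _))
  simp only [map_mul, map_zpow, map_inv] at h
  exact mul_inv_eq_one.mp h

def toPermRat (hm : m ≠ 0) (hn : n ≠ 0) : BaumslagSolitar m n →* Equiv.Perm ℚ :=
  PresentedGroup.toGroup (f := ![Equiv.addRight 1, Equiv.mulRight₀ ((n : ℚ) / m)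
      (div_ne_zero (Int.cast_ne_zero.2 hn) (Int.cast_ne_zero.2 hm))]) <| by
    rintro r rfl
    ext x
    have hm' : (m : ℚ) ≠ 0 := Int.cast_ne_zero.2 hm
    simp only [map_mul, map_zpow, map_inv, FreeGroup.lift_apply_of, Matrix.cons_val_zero,
      Matrix.cons_val_one, Matrix.cons_val_fin_one, Equiv.zsmul_addRight, Equiv.Perm.mul_apply,
      Equiv.Perm.inv_def, Equiv.addRight_symm, Equiv.coe_addRight, Equiv.mulRight₀_symm_apply,
      Equiv.mulRight₀_apply, Equiv.Perm.coe_one, id_eq, zsmul_eq_mul, mul_one, inv_div]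
    field_simp
    ring

theorem orderOf_a (hm : m ≠ 0) (hn : n ≠ 0) : orderOf (a : BaumslagSolitar m n) = 0 := by
  have hrep : toPermRat hm hn a = Equiv.addRight 1 := PresentedGroup.toGroup.of _
  have hshift : orderOf (Equiv.addRight (1 : ℚ)) = 0 := by
    refine orderOf_eq_zero_iff'.2 fun k hk hk1 ↦ ?_
    simpa [hk.ne'] using congrArg (· (0 : ℚ)) hk1
  simpa [hrep, hshift] using orderOf_map_dvd (toPermRat hm hn) a

end BaumslagSolitar

/-- If a group contains a non-Euclidean Baumslag–Solitar subgroup, then no finite-index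
subgroup satisfies the strongest Tits alternative: every finite-index subgroup `H` has a
subgroup which neither surjects `F₂` nor is torsion-free abelian. -/
theorem no_strongest_Tits_with_nonEuclidean_BS {G : Type} [Group G] (m n : ℤ)
    (hm : m ≠ 0) (hn : n ≠ 0) (hmn : |m| ≠ |n|)
    (hBS : ∃ K : Subgroup G, Nonempty (K ≃* BaumslagSolitar m n)) :
    ∀ H : Subgroup G, H.FiniteIndex →
      ∃ S : Subgroup H, ¬ SurjectsF2 S ∧ ¬ TorsionFreeAbelian S := by
  obtain ⟨K, ⟨e⟩⟩ := hBS
  intro H hH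
  let ψ : BaumslagSolitar m n →* G := K.subtype.comp e.symm.toMonoidHom
  have hψ : Function.Injective ψ := K.subtype_injective.comp e.symm.injective
  set T := ψ BaumslagSolitar.t
  set A := ψ BaumslagSolitar.a
  have hA : orderOf A = 0 := by rw [orderOf_injective ψ hψ, BaumslagSolitar.orderOf_a hm hn]
  have hrel : T * A ^ m * T⁻¹ = A ^ n := by
    simpa using congrArg ψ BaumslagSolitar.t_mul_a_zpow_mul_t_inv
  obtain ⟨k, hk, -, hTk⟩ := exists_pow_mem_of_index_ne_zero hH.index_ne_zero T
  obtain ⟨l, hl, -, hAl⟩ := exists_pow_mem_of_index_ne_zero hH.index_ne_zero A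
  refine exists_subgroup_not_surjectsF2_not_torsionFreeAbelian (x := ⟨_, hTk⟩) (y := ⟨_, hAl⟩)
    (m := m ^ k) (n := n ^ k) ?_ (pow_ne_pow_of_abs_ne hmn hk.ne') ?_
  · simpa using orderOf_eq_zero_iff'.1 hA l hl
  · ext
    simpa using conj_pow_zpow_pow_eq_zpow_pow hrel k l
end

section
/- Let i, j, k be integers with i ≠ 0 and (j,k) ≠ (0,0), and let G be the group presented by generators x, y, t and relators xy = yx, t xⁱ t⁻¹ = xʲyᵏ. Then G admits a surjective group homomorphism onto the free group F₂ of rank 2 if and only if k = 0. -/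
/-!
For `k = 0`, killing `x` maps the group onto the free group on `y, t`.

Conversely, let `X, Y, T` be the images of `x, y, t` under a surjection onto `F₂`. Commuting
elements of a free group are powers of a common element (a commutative subgroup of a free group
is free, hence cyclic), so `X = c ^ a`, `Y = c ^ b`, and then `c, T` generate `F₂` with
`T c^(ai) T⁻¹ = c^(aj + bk)`. Pushed to the integer Heisenberg group, `c` and `T` have unimodular
abelianizations; the abelianization then forces `ai = aj + bk = m`, and the central coordinate of
`[T, c ^ m]`, which is `m` times that unit, forces `m = 0`. As `i, k ≠ 0`, this gives `a = b = 0`,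
and `F₂` would be cyclic, generated by `T`.
-/

/-- Generators `x, y, t`. -/
def x8 : FreeGroup (Fin 3) := FreeGroup.of 0
def y8 : FreeGroup (Fin 3) := FreeGroup.of 1
def t8 : FreeGroup (Fin 3) := FreeGroup.of 2

/-- Relators `xy = yx`, `t xⁱ t⁻¹ = xʲ yᵏ`. -/
def rels8 (i j k : ℤ) : Set (FreeGroup (Fin 3)) :=
  {x8 * y8 * (y8 * x8)⁻¹, t8 * x8 ^ i * t8⁻¹ * (x8 ^ j * y8 ^ k)⁻¹}

/-- The integer Heisenberg group, `(a, b, c)` standing for the matrix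
`[[1, a, c], [0, 1, b], [0, 0, 1]]`. -/
@[ext] structure Heis where
  a : ℤ
  b : ℤ
  c : ℤ

namespace Heis

instance : Mul Heis := ⟨fun z w => ⟨z.a + w.a, z.b + w.b, z.c + w.c + z.a * w.b⟩⟩
instance : One Heis := ⟨⟨0, 0, 0⟩⟩
instance : Inv Heis := ⟨fun z => ⟨-z.a, -z.b, z.a * z.b - z.c⟩⟩

@[simp] lemma mul_a (z w : Heis) : (z * w).a = z.a + w.a := rfl
@[simp] lemma mul_b (z w : Heis) : (z * w).b = z.b + w.b := rfl
@[simp] lemma mul_c (z w : Heis) : (z * w).c = z.c + w.c + z.a * w.b := rfl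
@[simp] lemma one_a : (1 : Heis).a = 0 := rfl
@[simp] lemma one_b : (1 : Heis).b = 0 := rfl
@[simp] lemma one_c : (1 : Heis).c = 0 := rfl
@[simp] lemma inv_a (z : Heis) : z⁻¹.a = -z.a := rfl
@[simp] lemma inv_b (z : Heis) : z⁻¹.b = -z.b := rfl
@[simp] lemma inv_c (z : Heis) : z⁻¹.c = z.a * z.b - z.c := rfl

instance : Group Heis where
  mul_assoc x y z := by ext <;> simp <;> ring
  one_mul x := by ext <;> simp
  mul_one x := by ext <;> simp
  inv_mul_cancel x := by ext <;> simp

@[simp] lemma zpow_a (z : Heis) (m : ℤ) : (z ^ m).a = m * z.a := by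
  induction m using Int.induction_on with
  | zero => simp
  | succ n ih => rw [zpow_add_one, mul_a, ih]; ring
  | pred n ih => rw [zpow_sub_one, mul_a, inv_a, ih]; ring

@[simp] lemma zpow_b (z : Heis) (m : ℤ) : (z ^ m).b = m * z.b := by
  induction m using Int.induction_on with
  | zero => simp
  | succ n ih => rw [zpow_add_one, mul_b, ih]; ring
  | pred n ih => rw [zpow_sub_one, mul_b, inv_b, ih]; ring

def α : Heis := ⟨1, 0, 0⟩
def β : Heis := ⟨0, 1, 0⟩

lemma α_mul_β_ne : α * β ≠ β * α := fun h => by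
  simpa [α, β] using congrArg Heis.c h

/-- The commutator of `z` and `w` is central with `c`-coordinate `det z w`. -/
def det (z w : Heis) : ℤ := z.a * w.b - z.b * w.a

lemma exists_coords_of_mem_closure {C T z : Heis} (hz : z ∈ Subgroup.closure {C, T}) :
    ∃ m n : ℤ, z.a = m * C.a + n * T.a ∧ z.b = m * C.b + n * T.b := by
  induction hz using Subgroup.closure_induction with
  | mem w hw =>
    rcases hw with rfl | rfl
    · exact ⟨1, 0, by ring, by ring⟩
    · exact ⟨0, 1, by ring, by ring⟩
  | one => exact ⟨0, 0, by simp, by simp⟩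
  | mul x y _ _ ihx ihy =>
    obtain ⟨m₁, n₁, ha₁, hb₁⟩ := ihx
    obtain ⟨m₂, n₂, ha₂, hb₂⟩ := ihy
    exact ⟨m₁ + m₂, n₁ + n₂, by simp only [mul_a, ha₁, ha₂]; ring,
      by simp only [mul_b, hb₁, hb₂]; ring⟩
  | inv x _ ih =>
    obtain ⟨m, n, ha, hb⟩ := ih
    exact ⟨-m, -n, by simp only [inv_a, ha]; ring, by simp only [inv_b, hb]; ring⟩

lemma isUnit_det_of_closure_le {C T : Heis}
    (h : Subgroup.closure {α, β} ≤ Subgroup.closure {C, T}) : IsUnit (det C T) := by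
  obtain ⟨m₁, n₁, ha₁, hb₁⟩ :=
    exists_coords_of_mem_closure (h (Subgroup.subset_closure (Set.mem_insert α {β})))
  obtain ⟨m₂, n₂, ha₂, hb₂⟩ :=
    exists_coords_of_mem_closure (h (Subgroup.subset_closure (Set.mem_insert_of_mem α rfl)))
  refine IsUnit.of_mul_eq_one (m₁ * n₂ - m₂ * n₁) ?_
  simp only [α, β] at ha₁ hb₁ ha₂ hb₂
  rw [det]
  linear_combination (m₂ * C.a + n₂ * T.a) * hb₁ - (m₂ * C.b + n₂ * T.b) * ha₁ - hb₂

lemma eq_zero_of_conj_zpow {C T : Heis} {m n : ℤ} (hdet : det C T ≠ 0)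
    (h : T * C ^ m * T⁻¹ = C ^ n) : m = 0 ∧ n = 0 := by
  have hC : C.a ≠ 0 ∨ C.b ≠ 0 := by
    by_contra! hC
    exact hdet (by simp [det, hC])
  have ha := congrArg Heis.a h
  have hb := congrArg Heis.b h
  simp only [mul_a, mul_b, inv_a, inv_b, zpow_a, zpow_b] at ha hb
  obtain rfl : m = n := by
    rcases hC with hC | hC
    · exact mul_right_cancel₀ hC (by linarith)
    · exact mul_right_cancel₀ hC (by linarith)
  rw [mul_inv_eq_iff_eq_mul] at h
  have hc := congrArg Heis.c h
  simp only [mul_c, zpow_a, zpow_b] at hc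
  have hm : m * det C T = 0 := by unfold det; linear_combination -hc
  have hm0 := (mul_eq_zero.1 hm).resolve_right hdet
  exact ⟨hm0, hm0⟩

end Heis

namespace FreeGroup

lemma eq_of_commute_of {ι : Type*} {u v : ι} (h : Commute (of u) (of v)) : u = v := by
  classical
  by_contra huv
  have := congrArg (lift fun w => if w = u then Heis.α else Heis.β) h.eq
  simp only [_root_.map_mul, lift_apply_of, ↓reduceIte, Ne.symm huv] at this
  exact Heis.α_mul_β_ne this

lemma not_isCyclic {ι : Type*} [Nontrivial ι] : ¬ IsCyclic (FreeGroup ι) := fun _ =>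
  let ⟨_, _, huv⟩ := exists_pair_ne ι
  huv (eq_of_commute_of (IsCyclic.commGroup.mul_comm _ _))

lemma isCyclic_of_subsingleton {ι : Type*} [Subsingleton ι] : IsCyclic (FreeGroup ι) := by
  obtain ⟨g, hg⟩ : ∃ g : FreeGroup ι, Set.range of ⊆ {g} := by
    rcases isEmpty_or_nonempty ι with _ | ⟨⟨u⟩⟩
    · exact ⟨1, by simp [Set.range_eq_empty]⟩
    · exact ⟨of u, by rintro _ ⟨v, rfl⟩; rw [Subsingleton.elim v u]; rfl⟩
  refine isCyclic_iff_exists_zpowers_eq_top.2 ⟨g, top_unique ?_⟩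
  rw [← closure_range_of, Subgroup.zpowers_eq_closure]
  exact Subgroup.closure_mono hg

end FreeGroup

lemma IsFreeGroup.isCyclic_of_isMulCommutative (G : Type*) [Group G] [IsFreeGroup G]
    [IsMulCommutative G] : IsCyclic G := by
  let b := IsFreeGroup.basis G
  have : Subsingleton (IsFreeGroup.Generators G) := ⟨fun u v => by
    apply FreeGroup.eq_of_commute_of
    rw [← b.repr_apply_coe, ← b.repr_apply_coe]
    exact Commute.map (Std.Commutative.comm (op := (· * ·)) (b u) (b v)) _⟩
  have := FreeGroup.isCyclic_of_subsingleton (ι := IsFreeGroup.Generators G)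
  exact isCyclic_of_surjective b.repr.symm b.repr.symm.surjective

lemma IsFreeGroup.exists_zpow_eq_of_commute {G : Type*} [Group G] [IsFreeGroup G] {x y : G}
    (h : Commute x y) : ∃ (g : G) (m n : ℤ), g ^ m = x ∧ g ^ n = y := by
  let H := Subgroup.closure {x, y}
  have : IsMulCommutative H := Subgroup.isMulCommutative_closure <| by
    rintro _ (rfl | rfl) _ (rfl | rfl)
    exacts [rfl, h.eq, h.symm.eq, rfl]
  have := isCyclic_of_isMulCommutative H
  obtain ⟨g, hg⟩ := IsCyclic.exists_generator (α := H)
  obtain ⟨m, hm⟩ := hg ⟨x, Subgroup.subset_closure (Set.mem_insert x {y})⟩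
  obtain ⟨n, hn⟩ := hg ⟨y, Subgroup.subset_closure (Set.mem_insert_of_mem x rfl)⟩
  exact ⟨g, m, n, congrArg Subtype.val hm, congrArg Subtype.val hn⟩

namespace FreeGroup

lemma eq_zero_of_conj_zpow {c T : FreeGroup (Fin 2)} {m n : ℤ}
    (hgen : Subgroup.closure {c, T} = ⊤) (h : T * c ^ m * T⁻¹ = c ^ n) : m = 0 ∧ n = 0 := by
  let ψ : FreeGroup (Fin 2) →* Heis := lift ![Heis.α, Heis.β]
  refine Heis.eq_zero_of_conj_zpow (C := ψ c) (T := ψ T) ?_ (by simpa using congrArg ψ h)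
  refine (Heis.isUnit_det_of_closure_le ?_).ne_zero
  calc Subgroup.closure {Heis.α, Heis.β}
      = (Subgroup.closure {of 0, of 1}).map ψ := by
        rw [MonoidHom.map_closure, Set.image_pair]; simp [ψ]
    _ ≤ (Subgroup.closure {c, T}).map ψ := Subgroup.map_mono (hgen ▸ le_top)
    _ = Subgroup.closure {ψ c, ψ T} := by rw [MonoidHom.map_closure, Set.image_pair]

lemma closure_ne_top_of_conj_zpow_eq {X Y T : FreeGroup (Fin 2)} {i j k : ℤ} (hi : i ≠ 0)
    (hk : k ≠ 0) (hXY : Commute X Y) (hT : T * X ^ i * T⁻¹ = X ^ j * Y ^ k) :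
    Subgroup.closure {X, Y, T} ≠ ⊤ := by
  intro hgen
  obtain ⟨c, a, b, rfl, rfl⟩ := IsFreeGroup.exists_zpow_eq_of_commute hXY
  have hcT : Subgroup.closure {c, T} = ⊤ := by
    refine top_unique (hgen ▸ Subgroup.closure_le _ |>.2 ?_)
    rintro _ (rfl | rfl | rfl)
    · exact zpow_mem (Subgroup.subset_closure (Set.mem_insert c {T})) a
    · exact zpow_mem (Subgroup.subset_closure (Set.mem_insert c {T})) b
    · exact Subgroup.subset_closure (Set.mem_insert_of_mem c rfl)
  have hconj : T * c ^ (a * i) * T⁻¹ = c ^ (a * j + b * k) := by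
    simpa only [zpow_mul, zpow_add] using hT
  obtain ⟨hai, habk⟩ := eq_zero_of_conj_zpow hcT hconj
  obtain rfl : a = 0 := (mul_eq_zero.1 hai).resolve_right hi
  obtain rfl : b = 0 := (mul_eq_zero.1 (by simpa using habk)).resolve_right hk
  refine not_isCyclic (isCyclic_iff_exists_zpowers_eq_top.2 ⟨T, top_unique ?_⟩)
  rw [← hgen, Subgroup.closure_le, Set.insert_subset_iff, Set.insert_subset_iff,
    Set.singleton_subset_iff]
  exact ⟨one_mem _, one_mem _, Subgroup.mem_zpowers T⟩

end FreeGroup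

lemma rels8_commute (i j k : ℤ) :
    Commute (PresentedGroup.mk (rels8 i j k) x8) (PresentedGroup.mk (rels8 i j k) y8) := by
  rw [Commute, SemiconjBy, ← map_mul, ← map_mul]
  exact PresentedGroup.mk_eq_mk_of_mul_inv_mem (Set.mem_insert _ _)

lemma rels8_conj (i j k : ℤ) :
    PresentedGroup.mk (rels8 i j k) t8 * PresentedGroup.mk (rels8 i j k) x8 ^ i *
        (PresentedGroup.mk (rels8 i j k) t8)⁻¹ =
      PresentedGroup.mk (rels8 i j k) x8 ^ j * PresentedGroup.mk (rels8 i j k) y8 ^ k := by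
  simp only [← map_zpow, ← map_inv, ← map_mul]
  exact PresentedGroup.mk_eq_mk_of_mul_inv_mem (Set.mem_insert_of_mem _ rfl)

lemma rels8_not_surjective {i j k : ℤ} (hi : i ≠ 0) (hk : k ≠ 0)
    (f : PresentedGroup (rels8 i j k) →* FreeGroup (Fin 2)) : ¬ Function.Surjective f := by
  intro hf
  refine FreeGroup.closure_ne_top_of_conj_zpow_eq hi hk ((rels8_commute i j k).map f)
    (by simpa only [map_mul, map_inv, map_zpow] using congrArg f (rels8_conj i j k)) ?_
  rw [eq_top_iff, ← MonoidHom.range_eq_top.2 hf, MonoidHom.range_eq_map,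
    ← PresentedGroup.closure_range_of, MonoidHom.map_closure, Subgroup.closure_le]
  rintro _ ⟨_, ⟨v, rfl⟩, rfl⟩
  refine Subgroup.subset_closure ?_
  fin_cases v
  exacts [Or.inl rfl, Or.inr (Or.inl rfl), Or.inr (Or.inr rfl)]

lemma rels8_exists_surjective (i j : ℤ) :
    ∃ f : PresentedGroup (rels8 i j 0) →* FreeGroup (Fin 2), Function.Surjective f := by
  have hrels : ∀ r ∈ rels8 i j 0, FreeGroup.lift (![1, .of 0, .of 1] : Fin 3 → FreeGroup (Fin 2)) r = 1 := by
    rintro r (rfl | rfl) <;> simp [x8, y8, t8]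
  refine ⟨PresentedGroup.toGroup hrels, ?_⟩
  rw [← MonoidHom.range_eq_top, eq_top_iff, ← FreeGroup.closure_range_of, Subgroup.closure_le]
  rintro _ ⟨v, rfl⟩
  fin_cases v
  exacts [⟨PresentedGroup.of 1, by simp⟩, ⟨PresentedGroup.of 2, by simp⟩]

theorem self_loop_surjects_F2_iff_general (i j k : ℤ) (hi : i ≠ 0) :
    (∃ f : PresentedGroup (rels8 i j k) →* FreeGroup (Fin 2), Function.Surjective f) ↔
      k = 0 := by
  refine ⟨fun ⟨f, hf⟩ => ?_, ?_⟩
  · by_contra hk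
    exact rels8_not_surjective hi hk f hf
  · rintro rfl
    exact rels8_exists_surjective i j

/-- Part of Proposition 4.1: the single-self-loop tubular group
`⟨x, y, t | [x,y], t xⁱ t⁻¹ = xʲyᵏ⟩` surjects the free group `F₂` iff `k = 0`. -/
theorem self_loop_surjects_F2_iff (i j k : ℤ) (hi : i ≠ 0) (hjk : (j, k) ≠ (0, 0)) :
    (∃ f : PresentedGroup (rels8 i j k) →* FreeGroup (Fin 2), Function.Surjective f) ↔
      k = 0 :=
  self_loop_surjects_F2_iff_general i j k hi
end
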